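/- arXiv:1203.5447 — 15 statements merged into one kernel-verified Lean document; each statement's English description precedes it below -/
import Mathlib

section
/- Let n ≥ 2 be an integer, b ∈ ℂ, and let w ∈ ℂ be a periodic point of the map g_b, say of period h ≥ 1, with multiplier μ = ∏_{j=0}^{h-1} (g_b^{∘j}(w))^{n-1}. Then the four subrings ℤ[μ], ℤ[w], ℤ[b], and ℤ[b^{n-1}] of ℂ all have the same integral closure in ℂ. -/
/-!
The integral closure of a subring of `ℂ` is the intersection of the valuation subrings containing
it, so it suffices to show that a valuation `v` on `ℂ` is `≤ 1` either at all four of `μ`, `w`,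
`b`, `b ^ (n - 1)` or at none of them. Along the orbit of `w` we have
`n * x_{j+1} = x_j ^ n + b` and `v n ≤ 1`. If an orbit point `x` of maximal valuation has
`v x > 1`, the ultrametric inequality forces `v x ^ n ≤ v b`, since otherwise
`v x ^ n ≤ v x_{next} ≤ v x`. Hence if `v b ≤ 1` the whole orbit has valuation `≤ 1`; if `v b > 1`
an orbit point of valuation `≤ 1` would have a successor of valuation `≥ v b`, making the maximum
`M` satisfy `v b ≤ M < M ^ n ≤ v b`.
-/
/-- The integral closure of `ℤ[u]` in `ℂ`: the set of complex numbers satisfying a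
monic polynomial equation with coefficients in the subring `ℤ[u]` of `ℂ`. -/
noncomputable def intClosure (u : ℂ) : Set ℂ :=
  {x : ℂ | IsIntegral ↥(Algebra.adjoin ℤ ({u} : Set ℂ)) x}

open Function Finset

lemma isIntegral_adjoin_int_iff {B : Type*} [CommRing B] {s : Set B} {x : B} :
    IsIntegral (Algebra.adjoin ℤ s) x ↔ IsIntegral (Subring.closure s) x := by
  suffices ∀ S, S = subalgebraOfSubring (Subring.closure s) →
      (IsIntegral S x ↔ IsIntegral (Subring.closure s) x) from this _ (Algebra.adjoin_int s)
  rintro S rfl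
  rfl

lemma mem_intClosure_iff {u x : ℂ} :
    x ∈ intClosure u ↔ ∀ V : ValuationSubring ℂ, u ∈ V → x ∈ V := by
  have := SetLike.ext_iff.mp (iInf_valuationSubring_superset (s := ({u} : Set ℂ))) x
  simp only [Subring.mem_iInf, Set.singleton_subset_iff, Subtype.forall] at this
  exact isIntegral_adjoin_int_iff.trans this.symm

lemma intClosure_eq_of_forall_mem_iff {u u' : ℂ}
    (h : ∀ V : ValuationSubring ℂ, u ∈ V ↔ u' ∈ V) : intClosure u = intClosure u' := by
  ext x
  simp only [mem_intClosure_iff, h]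

section PeriodicOrbit

variable {R Γ₀ : Type*} [CommRing R] [LinearOrderedCommGroupWithZero Γ₀] (v : Valuation R Γ₀)
  {f : R → R} {n h : ℕ} {b c w : R}

lemma Function.IsPeriodicPt.exists_forall_valuation_iterate_le (hw : IsPeriodicPt f h w)
    (hh : 0 < h) : ∃ i, ∀ j, v (f^[j] w) ≤ v (f^[i] w) := by
  obtain ⟨i, -, hi⟩ :=
    (range h).exists_max_image (fun j => v (f^[j] w)) (nonempty_range_iff.mpr hh.ne')
  exact ⟨i, fun j => hw.iterate_mod_apply j ▸ hi _ (mem_range.mpr (Nat.mod_lt _ hh))⟩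

variable (hc : v c ≤ 1) (hf : ∀ t, c * f t = t ^ n + b)
include hc hf

lemma Valuation.le_apply_of_le_one {x : R} (hx : v x ≤ 1) (hb : 1 < v b) : v b ≤ v (f x) := by
  have hxn : v (x ^ n) < v b := by rw [map_pow]; exact (pow_le_one' hx n).trans_lt hb
  calc v b = v (x ^ n + b) := (v.map_add_eq_of_lt_right hxn).symm
    _ = v c * v (f x) := by rw [← hf, map_mul]
    _ ≤ v (f x) := mul_le_of_le_one_left' hc

variable (hn : 2 ≤ n)
include hn

lemma Valuation.pow_le_of_apply_le {x : R} (hfx : v (f x) ≤ v x) (hx : 1 < v x) :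
    v x ^ n ≤ v b := by
  by_contra! hlt
  refine lt_irrefl (v x ^ n) ?_
  calc v x ^ n = v (x ^ n + b) := by rw [v.map_add_eq_of_lt_left (by rwa [map_pow]), map_pow]
    _ = v c * v (f x) := by rw [← hf, map_mul]
    _ ≤ v (f x) := mul_le_of_le_one_left' hc
    _ ≤ v x := hfx
    _ < v x ^ n := lt_self_pow₀ hx hn

variable (hw : IsPeriodicPt f h w) (hh : 0 < h)
include hw hh

theorem Valuation.iterate_le_one_iff (j : ℕ) : v (f^[j] w) ≤ 1 ↔ v b ≤ 1 := by
  obtain ⟨i, hi⟩ := hw.exists_forall_valuation_iterate_le v hh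
  have hmax : 1 < v (f^[i] w) → v (f^[i] w) ^ n ≤ v b :=
    v.pow_le_of_apply_le hc hf hn (iterate_succ_apply' f i w ▸ hi (i + 1))
  constructor
  · intro hj
    by_contra! hb
    have hbM : v b ≤ v (f^[i] w) :=
      (v.le_apply_of_le_one hc hf hj hb).trans (iterate_succ_apply' f j w ▸ hi (j + 1))
    have hM : 1 < v (f^[i] w) := hb.trans_le hbM
    exact (hmax hM).not_gt (hbM.trans_lt (lt_self_pow₀ hM hn))
  · intro hb
    refine (hi j).trans (not_lt.mp fun hM => ?_)
    exact (hmax hM).not_gt (hb.trans_lt (one_lt_pow' hM (by omega)))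

theorem Valuation.prod_iterate_pow_le_one_iff {m : ℕ} (hm : m ≠ 0) :
    v (∏ j ∈ range h, (f^[j] w) ^ m) ≤ 1 ↔ v b ≤ 1 := by
  simp only [map_prod, map_pow]
  constructor
  · intro hprod
    by_contra! hb
    have hgt : ∀ j, 1 < v (f^[j] w) := fun j =>
      not_le.mp fun hj => hb.not_ge ((v.iterate_le_one_iff hc hf hn hw hh j).mp hj)
    refine (one_lt_pow' (hgt 0) hm).not_ge (le_trans ?_ hprod)
    exact single_le_prod' (fun j _ => one_le_pow_of_one_le' (hgt j).le m) (mem_range.mpr hh)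
  · intro hb
    exact prod_le_one' fun j _ => pow_le_one' ((v.iterate_le_one_iff hc hf hn hw hh j).mpr hb) m

end PeriodicOrbit

theorem stmt0 (n : ℕ) (hn : 2 ≤ n) (b : ℂ) (g : ℂ → ℂ)
    (hg : g = fun z : ℂ => (z ^ n + b) / n)
    (w : ℂ) (h : ℕ) (hh : 1 ≤ h) (hper : g^[h] w = w)
    (μ : ℂ) (hμ : μ = ∏ j ∈ Finset.range h, (g^[j] w) ^ (n - 1)) :
    intClosure μ = intClosure w ∧ intClosure w = intClosure b ∧
      intClosure b = intClosure (b ^ (n - 1)) := by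
  have hn0 : (n : ℂ) ≠ 0 := by exact_mod_cast (by omega : n ≠ 0)
  have hrec : ∀ t, (n : ℂ) * g t = t ^ n + b := fun t => by rw [hg]; field_simp
  have hvn (V : ValuationSubring ℂ) : V.valuation n ≤ 1 :=
    (V.valuation_le_one_iff _).mpr (natCast_mem V.toSubring n)
  have hwV (V : ValuationSubring ℂ) : w ∈ V ↔ b ∈ V := by
    simpa only [iterate_zero_apply, V.valuation_le_one_iff] using
      V.valuation.iterate_le_one_iff (hvn V) hrec hn hper hh 0
  have hμV (V : ValuationSubring ℂ) : μ ∈ V ↔ b ∈ V := by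
    simpa only [hμ, V.valuation_le_one_iff] using
      V.valuation.prod_iterate_pow_le_one_iff (hvn V) hrec hn hper hh (by omega)
  have hbV (V : ValuationSubring ℂ) : b ∈ V ↔ b ^ (n - 1) ∈ V := by
    simp only [← V.valuation_le_one_iff, map_pow, pow_le_one_iff (by omega : n - 1 ≠ 0)]
  exact ⟨intClosure_eq_of_forall_mem_iff fun V => (hμV V).trans (hwV V).symm,
    intClosure_eq_of_forall_mem_iff hwV, intClosure_eq_of_forall_mem_iff hbV⟩
end

section
/- Let u and v be complex numbers. If the integral closure of ℤ[u] in ℂ is equal to the integral closure of ℤ[v] in ℂ, then it is also equal to the integral closure of ℤ[uv] in ℂ. -/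
/-!
Write `O(w)` for the integral closure of `ℤ[w]`. If `u ∈ O(w)` then `ℤ[u] ⊆ O(w)`, so by
transitivity of integrality `O(u) ⊆ O(w)`. When `O(u) = O(v)`, both `u` and `v` lie in `O(u)`,
hence so does `uv`, giving `O(uv) ⊆ O(u)`. For the converse it suffices that `u` is integral over
`ℤ[uv]`: after inverting `u`, `v = uv · u⁻¹` lies in `ℤ[uv][u⁻¹]`, so `u` is integral over
`ℤ[uv][u⁻¹]`; an element integral over `R[t⁻¹]` is integral over `R`, and integrality of `u` in
the localization at `u` descends to the ring itself.
-/

open Polynomial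

theorem isIntegral_adjoin_singleton_self (R : Type*) {A : Type*} [CommRing R] [CommRing A]
    [Algebra R A] (t : A) : IsIntegral (Algebra.adjoin R {t}) t :=
  isIntegral_algebraMap
    (x := (⟨t, Algebra.self_mem_adjoin_singleton R t⟩ : Algebra.adjoin R {t}))

theorem isIntegral_of_isIntegral_adjoin_singleton {R S B : Type*} [CommRing R] [CommRing S]
    [CommRing B] [Algebra R S] [Algebra R B] [Algebra S B] [IsScalarTower R S B] {t x : B}
    (ht : IsIntegral S t) (hx : IsIntegral (Algebra.adjoin R {t}) x) : IsIntegral S x := by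
  nontriviality B
  have hle : Algebra.adjoin R {t} ≤ (integralClosure S B).restrictScalars R :=
    Algebra.adjoin_le (Set.singleton_subset_iff.mpr ht)
  obtain ⟨p, hpm, hpx⟩ := hx
  refine IsIntegral.of_aeval_monic_of_isIntegral_coeff (hpm.map (algebraMap _ B)) ?_ ?_ ?_
  · rw [hpm.natDegree_map, Ne, hpm.natDegree_eq_zero]
    rintro rfl
    simp at hpx
  · rw [eval_map, hpx]
    exact isIntegral_zero
  · intro i
    rw [coeff_map]
    exact hle (p.coeff i).2

theorem IsIntegral.map_adjoin_singleton {R A B : Type*} [CommRing R] [CommRing A] [CommRing B]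
    [Algebra R A] [Algebra R B] (f : A →ₐ[R] B) {a b : A}
    (h : IsIntegral (Algebra.adjoin R {b}) a) : IsIntegral (Algebra.adjoin R {f b}) (f a) := by
  have hmap : ∀ x ∈ Algebra.adjoin R {b}, f x ∈ Algebra.adjoin R {f b} := by
    intro x hx
    rw [← Set.image_singleton, ← AlgHom.map_adjoin]
    exact ⟨x, hx, rfl⟩
  exact h.map_of_comp_eq (((f.comp (Algebra.adjoin R {b}).val).codRestrict _
    fun x => hmap x x.2) : _ →+* _) (f : A →+* B) rfl

theorem isIntegral_adjoin_mul_of_isIntegral_adjoin {R A : Type*} [CommRing R] [CommRing A]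
    [Algebra R A] {a b : A} (h : IsIntegral (Algebra.adjoin R {b}) a) :
    IsIntegral (Algebra.adjoin R {a * b}) a := by
  let R' := Algebra.adjoin R {a * b}
  let s := IsLocalization.Away.invSelf (S := Localization.Away a) a
  have hs : s * algebraMap A _ a = 1 := by
    rw [mul_comm]
    exact IsLocalization.Away.mul_invSelf a
  have hb_eq : algebraMap A _ b =
      algebraMap R' _ (⟨a * b, Algebra.self_mem_adjoin_singleton R _⟩ : R') * s := by
    change _ = algebraMap A _ (a * b) * s
    rw [map_mul, mul_comm (algebraMap A _ a), mul_assoc, mul_comm _ s, hs, mul_one]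
  have hb : IsIntegral (Algebra.adjoin R' {s}) (algebraMap A (Localization.Away a) b) := by
    rw [hb_eq]
    exact (isIntegral_algebraMap (R := R')).tower_top.mul (isIntegral_adjoin_singleton_self R' s)
  refine IsLocalization.Away.isIntegral_of_isIntegral_map (Sₘ := Localization.Away a) a ?_
  refine isIntegral_of_isIntegral_adjoin_of_mul_eq_one _ s hs ?_
  exact isIntegral_of_isIntegral_adjoin_singleton hb
    (h.map_adjoin_singleton (IsScalarTower.toAlgHom R A (Localization.Away a)))

theorem mem_intClosure_self (u : ℂ) : u ∈ intClosure u :=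
  isIntegral_adjoin_singleton_self ℤ u

theorem intClosure_subset_of_mem {u w : ℂ} (h : u ∈ intClosure w) :
    intClosure u ⊆ intClosure w :=
  fun _ hx => isIntegral_of_isIntegral_adjoin_singleton h hx

theorem stmt1 (u v : ℂ) (huv : intClosure u = intClosure v) :
    intClosure u = intClosure (u * v) := by
  have hu_u : u ∈ intClosure u := mem_intClosure_self u
  have hu_v : u ∈ intClosure v := huv ▸ hu_u
  have hv_u : v ∈ intClosure u := huv ▸ mem_intClosure_self v
  refine (intClosure_subset_of_mem ?_).antisymm (intClosure_subset_of_mem ?_)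
  · exact isIntegral_adjoin_mul_of_isIntegral_adjoin hu_v
  · exact IsIntegral.mul hu_u hv_u
end

section
/- Let n ≥ 2 be an integer, b ∈ ℂ, and let w ∈ ℂ be a periodic point of g_b of period h ≥ 1 with multiplier μ = ∏_{j=0}^{h-1} (g_b^{∘j}(w))^{n-1}. If any one of the four numbers μ, w, b, b^{n-1} is an algebraic integer, then all four of them are algebraic integers. -/
/-!
Being integral over `ℤ` means lying in every valuation subring of `ℂ`, so it suffices to compare
the four numbers one valuation `v` at a time; `v n ≤ 1` since `n ∈ ℤ`. As `n * g z = z ^ n + b`,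
the ultrametric inequality gives `v (g z) ≥ max (v z ^ n) (v b)` whenever `v z ^ n ≠ v b`.
Applied at an orbit point where `v` is largest, this forces all of `v` on the orbit to be `≤ 1`
when `v b ≤ 1`, and `v z ^ n = v b` for every orbit point `z` when `v b > 1`. Hence `v w ≤ 1`,
`v μ ≤ 1` and `v (b ^ (n - 1)) ≤ 1` are each equivalent to `v b ≤ 1`.
-/

open Finset Function

theorem isIntegral_int_iff_forall_mem_valuationSubring {K : Type*} [Field K] {x : K} :
    IsIntegral ℤ x ↔ ∀ V : ValuationSubring K, x ∈ V := by
  refine ⟨fun hx V => LocalSubring.mem_of_isMax_of_isIntegral V.isMax_toLocalSubring hx.tower_top,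
    fun hx => of_not_not fun hxR => ?_⟩
  have : IsIntegrallyClosedIn (integralClosure ℤ K).toSubring K :=
    inferInstanceAs (IsIntegrallyClosedIn (integralClosure ℤ K) K)
  obtain ⟨V, -, hxV⟩ := Subring.exists_le_valuationSubring_of_isIntegrallyClosedIn
    (R := (integralClosure ℤ K).toSubring) hxR
  exact hxV (hx V)

theorem isIntegral_int_iff_of_valuation_le_one_iff {K : Type*} [Field K] {x y : K}
    (hxy : ∀ V : ValuationSubring K, V.valuation x ≤ 1 ↔ V.valuation y ≤ 1) :
    IsIntegral ℤ x ↔ IsIntegral ℤ y := by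
  simp only [isIntegral_int_iff_forall_mem_valuationSubring,
    ← ValuationSubring.valuation_le_one_iff, hxy]

theorem Function.IsPeriodicPt.exists_forall_le_comp_iterate {α β : Type*} [LinearOrder β]
    {f : α → α} {h : ℕ} {w : α} (hw : IsPeriodicPt f h w) (hh : 0 < h) (φ : α → β) :
    ∃ j₀, ∀ j, φ (f^[j] w) ≤ φ (f^[j₀] w) := by
  obtain ⟨j₀, -, hj₀⟩ := (range h).exists_max_image (fun j => φ (f^[j] w)) ⟨0, mem_range.2 hh⟩
  exact ⟨j₀, fun j => hw.iterate_mod_apply j ▸ hj₀ _ (mem_range.2 (Nat.mod_lt j hh))⟩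

namespace Valuation

section

variable {R Γ₀ : Type*} [Ring R] [LinearOrderedCommGroupWithZero Γ₀] (v : Valuation R Γ₀)
  {n h : ℕ} {b c w z : R} {f : R → R}

theorem max_le_map_apply (hc : v c ≤ 1) (hf : ∀ z, c * f z = z ^ n + b)
    (hz : v z ^ n ≠ v b) : max (v z ^ n) (v b) ≤ v (f z) := by
  rw [← map_pow, ← map_add_of_distinct_val _ (by rwa [map_pow]), ← hf]
  simpa only [map_mul] using mul_le_of_le_one_left' hc

theorem map_iterate_le_one_of_le_one (hn : 2 ≤ n) (hc : v c ≤ 1)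
    (hf : ∀ z, c * f z = z ^ n + b) (hw : IsPeriodicPt f h w) (hh : 0 < h) (hb : v b ≤ 1) (j : ℕ) :
    v (f^[j] w) ≤ 1 := by
  obtain ⟨j₀, hj₀⟩ := hw.exists_forall_le_comp_iterate hh v
  refine (hj₀ j).trans (not_lt.1 fun hM => ?_)
  have hlt : v (f^[j₀] w) < v (f^[j₀] w) ^ n := by
    simpa using pow_lt_pow_right₀ hM (by omega : 1 < n)
  have hne : v (f^[j₀] w) ^ n ≠ v b := (hb.trans_lt (hM.trans hlt)).ne'
  have hnext : v (f (f^[j₀] w)) ≤ v (f^[j₀] w) := by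
    simpa only [iterate_succ_apply'] using hj₀ (j₀ + 1)
  exact hlt.not_ge ((le_max_left _ _).trans ((v.max_le_map_apply hc hf hne).trans hnext))

theorem map_iterate_pow_eq_of_one_lt (hn : 2 ≤ n) (hc : v c ≤ 1)
    (hf : ∀ z, c * f z = z ^ n + b) (hw : IsPeriodicPt f h w) (hh : 0 < h) (hb : 1 < v b) (j : ℕ) :
    v (f^[j] w) ^ n = v b := by
  obtain ⟨j₀, hj₀⟩ := hw.exists_forall_le_comp_iterate hh v
  set M := v (f^[j₀] w)
  have bound : ∀ j, v (f^[j] w) ^ n ≠ v b → max (v (f^[j] w) ^ n) (v b) ≤ M := fun j hne =>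
    (v.max_le_map_apply hc hf hne).trans <| by
      simpa only [iterate_succ_apply'] using hj₀ (j + 1)
  have not_both : v b ≤ M → M ^ n ≤ M → False := fun hbM hMn =>
    hMn.not_gt (by simpa using pow_lt_pow_right₀ (hb.trans_le hbM) (by omega : 1 < n))
  have hM : M ^ n = v b := by_contra fun hne =>
    not_both ((le_max_right _ _).trans (bound j₀ hne)) ((le_max_left _ _).trans (bound j₀ hne))
  exact by_contra fun hne =>
    not_both ((le_max_right _ _).trans (bound j hne)) (hM ▸ (le_max_right _ _).trans (bound j hne))

theorem map_iterate_le_one_iff (hn : 2 ≤ n) (hc : v c ≤ 1)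
    (hf : ∀ z, c * f z = z ^ n + b) (hw : IsPeriodicPt f h w) (hh : 0 < h) (j : ℕ) :
    v (f^[j] w) ≤ 1 ↔ v b ≤ 1 := by
  refine ⟨fun hj => not_lt.1 fun hb => ?_,
    fun hb => v.map_iterate_le_one_of_le_one hn hc hf hw hh hb j⟩
  rw [← v.map_iterate_pow_eq_of_one_lt hn hc hf hw hh hb j] at hb
  exact hb.not_ge (pow_le_one' hj n)

end

section

variable {R Γ₀ : Type*} [CommRing R] [LinearOrderedCommGroupWithZero Γ₀] (v : Valuation R Γ₀)
  {n h : ℕ} {b c w : R} {f : R → R}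

theorem map_prod_iterate_le_one_iff (hn : 2 ≤ n) (hc : v c ≤ 1)
    (hf : ∀ z, c * f z = z ^ n + b) (hw : IsPeriodicPt f h w) (hh : 0 < h) :
    v (∏ j ∈ range h, (f^[j] w) ^ (n - 1)) ≤ 1 ↔ v b ≤ 1 := by
  have hj := v.map_iterate_le_one_iff hn hc hf hw hh
  simp only [map_prod, map_pow]
  refine ⟨fun hμ => not_lt.1 fun hb => ?_,
    fun hb => prod_le_one' fun j _ => pow_le_one' ((hj j).2 hb) _⟩
  have hgt : ∀ j, 1 < v (f^[j] w) ^ (n - 1) := fun j =>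
    one_lt_pow' (not_le.1 (mt (hj j).1 hb.not_ge)) (by omega)
  exact hμ.not_gt ((hgt 0).trans_le (single_le_prod' (fun j _ => (hgt j).le) (mem_range.2 hh)))

end

end Valuation

theorem stmt2 (n : ℕ) (hn : 2 ≤ n) (b : ℂ) (g : ℂ → ℂ)
    (hg : g = fun z : ℂ => (z ^ n + b) / n)
    (w : ℂ) (h : ℕ) (hh : 1 ≤ h) (hper : g^[h] w = w)
    (μ : ℂ) (hμ : μ = ∏ j ∈ Finset.range h, (g^[j] w) ^ (n - 1))
    (hone : IsIntegral ℤ μ ∨ IsIntegral ℤ w ∨ IsIntegral ℤ b ∨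
      IsIntegral ℤ (b ^ (n - 1))) :
    IsIntegral ℤ μ ∧ IsIntegral ℤ w ∧ IsIntegral ℤ b ∧
      IsIntegral ℤ (b ^ (n - 1)) := by
  have hf : ∀ z, (n : ℂ) * g z = z ^ n + b := fun z => by
    rw [hg, mul_div_cancel₀ _ (Nat.cast_ne_zero.2 (by omega))]
  have hnV (V : ValuationSubring ℂ) : V.valuation (n : ℂ) ≤ 1 :=
    (V.valuation_le_one_iff _).2 (natCast_mem _ n)
  have hμb : IsIntegral ℤ μ ↔ IsIntegral ℤ b := isIntegral_int_iff_of_valuation_le_one_iff fun V =>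
    hμ ▸ V.valuation.map_prod_iterate_le_one_iff hn (hnV V) hf hper hh
  have hwb : IsIntegral ℤ w ↔ IsIntegral ℤ b := isIntegral_int_iff_of_valuation_le_one_iff fun V =>
    V.valuation.map_iterate_le_one_iff hn (hnV V) hf hper hh 0
  have hpb : IsIntegral ℤ (b ^ (n - 1)) ↔ IsIntegral ℤ b :=
    ⟨IsIntegral.of_pow (by omega), fun hb => hb.pow _⟩
  rw [hμb, hwb, hpb] at hone ⊢
  simpa using hone
end

section
/- Let n ≥ 2 be an integer and b ∈ ℂ. Suppose the map g_b is parabolic, i.e., there is a periodic point w₀ of some period h₀ ≥ 1 whose multiplier ∏_{j=0}^{h₀-1} (g_b^{∘j}(w₀))^{n-1} is a root of unity. Then b and b^{n-1} are algebraic integers, every periodic point of g_b is an algebraic integer, and the multiplier of every periodic orbit of g_b is an algebraic integer. -/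
/-!
Fix a valuation `v` on `ℂ`. Where `v z > 1` and `v b < v z ^ n`, the term
`zⁿ` dominates `zⁿ + b`, so `v (g_b z) ≥ v z ^ n > v z` and the orbit of `z` escapes: `z` is not
periodic. If `v b > 1`, this forces `v w ^ n = v b` along every periodic orbit, so the multiplier
has valuation `v b ^ (h (n - 1) / n) > 1` and cannot be a root of unity. Hence `v b ≤ 1`, and then
every periodic point has `v w ≤ 1`. Since this holds for every valuation subring of `ℂ`, and an
element lying in all of them is integral over `ℤ`, these numbers are algebraic integers.
-/

open Function

lemma isIntegral_int_of_forall_mem_valuationSubring {K : Type*} [Field K] {x : K}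
    (hx : ∀ V : ValuationSubring K, x ∈ V) : IsIntegral ℤ x := by
  by_contra hx'
  obtain ⟨V, -, hxV⟩ := Subring.exists_le_valuationSubring_of_isIntegrallyClosedIn
    (R := (integralClosure ℤ K).toSubring) hx'
  exact hxV (hx V)

lemma Valuation.map_natCast_le_one {R Γ₀ : Type*} [Ring R] [LinearOrderedCommMonoidWithZero Γ₀]
    (v : Valuation R Γ₀) (n : ℕ) : v n ≤ 1 := by
  induction n with
  | zero => simp
  | succ n ih => exact_mod_cast v.map_add_le ih v.map_one.le

section

variable {K : Type*} [Field K]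

def unicriticalMap (n : ℕ) (b z : K) : K := (z ^ n + b) / n

def multiplier (n : ℕ) (b : K) (h : ℕ) (w : K) : K :=
  ∏ j ∈ Finset.range h, (unicriticalMap n b)^[j] w ^ (n - 1)

variable {Γ₀ : Type*} [LinearOrderedCommGroupWithZero Γ₀] (v : Valuation K Γ₀)
  {n : ℕ} {b : K}

lemma valuation_add_le_valuation_unicriticalMap (hn0 : (n : K) ≠ 0) (z : K) :
    v (z ^ n + b) ≤ v (unicriticalMap n b z) := by
  have hvn : 0 < v n := zero_lt_iff.2 (v.ne_zero_iff.2 hn0)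
  rw [unicriticalMap, v.map_div, le_div_iff₀ hvn]
  exact mul_le_of_le_one_right' (v.map_natCast_le_one n)

lemma pow_valuation_le_valuation_unicriticalMap (hn0 : (n : K) ≠ 0) {z : K}
    (hz : v b < v z ^ n) : v z ^ n ≤ v (unicriticalMap n b z) := by
  have := valuation_add_le_valuation_unicriticalMap v (b := b) hn0 z
  rwa [v.map_add_eq_of_lt_left (by rwa [v.map_pow]), v.map_pow] at this

lemma valuation_le_valuation_unicriticalMap (hn0 : (n : K) ≠ 0) {z : K}
    (hz : v z ^ n < v b) : v b ≤ v (unicriticalMap n b z) := by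
  have := valuation_add_le_valuation_unicriticalMap v (b := b) hn0 z
  rwa [v.map_add_eq_of_lt_right (by rwa [v.map_pow])] at this

def escapingSet (v : Valuation K Γ₀) (n : ℕ) (b : K) : Set K :=
  {z | 1 < v z ∧ v b < v z ^ n}

lemma lt_valuation_unicriticalMap (hn : 2 ≤ n) (hn0 : (n : K) ≠ 0) {z : K}
    (hz : z ∈ escapingSet v n b) : v z < v (unicriticalMap n b z) :=
  (lt_self_pow₀ hz.1 hn).trans_le (pow_valuation_le_valuation_unicriticalMap v hn0 hz.2)

lemma mapsTo_escapingSet (hn : 2 ≤ n) (hn0 : (n : K) ≠ 0) :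
    Set.MapsTo (unicriticalMap n b) (escapingSet v n b) (escapingSet v n b) := by
  intro z hz
  have hlt := lt_valuation_unicriticalMap v hn hn0 hz
  have hgz : 1 < v (unicriticalMap n b z) := hz.1.trans hlt
  refine ⟨hgz, ?_⟩
  calc v b < v z ^ n := hz.2
    _ ≤ v (unicriticalMap n b z) := pow_valuation_le_valuation_unicriticalMap v hn0 hz.2
    _ ≤ v (unicriticalMap n b z) ^ n := le_self_pow₀ hgz.le (by omega)

lemma not_isPeriodicPt_of_mem_escapingSet (hn : 2 ≤ n) (hn0 : (n : K) ≠ 0) {z : K}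
    (hz : z ∈ escapingSet v n b) {h : ℕ} (hh : 0 < h) :
    ¬ IsPeriodicPt (unicriticalMap n b) h z := by
  intro hper
  have hmono : StrictMono fun k => v ((unicriticalMap n b)^[k] z) :=
    strictMono_nat_of_lt_succ fun k => by
      rw [iterate_succ_apply']
      exact lt_valuation_unicriticalMap v hn hn0 ((mapsTo_escapingSet v hn hn0).iterate k hz)
  have : v z < v ((unicriticalMap n b)^[h] z) := hmono hh
  rw [hper.eq] at this
  exact this.false

variable {h : ℕ} {w : K}

lemma valuation_le_one_of_isPeriodicPt (hn : 2 ≤ n) (hn0 : (n : K) ≠ 0) (hb : v b ≤ 1)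
    (hw : IsPeriodicPt (unicriticalMap n b) h w) (hh : 0 < h) : v w ≤ 1 := by
  by_contra! hw1
  refine not_isPeriodicPt_of_mem_escapingSet v hn hn0 ⟨hw1, ?_⟩ hh hw
  exact hb.trans_lt (hw1.trans (lt_self_pow₀ hw1 hn))

lemma pow_valuation_eq_of_isPeriodicPt (hn : 2 ≤ n) (hn0 : (n : K) ≠ 0) (hb : 1 < v b)
    (hw : IsPeriodicPt (unicriticalMap n b) h w) (hh : 0 < h) : v w ^ n = v b := by
  rcases lt_trichotomy (v w ^ n) (v b) with hlt | heq | hgt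
  · have hgw := valuation_le_valuation_unicriticalMap v hn0 hlt
    have hgw1 : 1 < v (unicriticalMap n b w) := hb.trans_le hgw
    refine absurd hw.apply (not_isPeriodicPt_of_mem_escapingSet v hn hn0 ⟨hgw1, ?_⟩ hh)
    exact hgw.trans_lt (lt_self_pow₀ hgw1 hn)
  · exact heq
  · have hw1 : 1 < v w := by
      by_contra! hw1
      exact (pow_le_one₀ zero_le hw1).not_gt (hb.trans hgt)
    exact absurd hw (not_isPeriodicPt_of_mem_escapingSet v hn hn0 ⟨hw1, hgt⟩ hh)

lemma valuation_le_one_of_multiplier_pow_eq_one (hn : 2 ≤ n) (hn0 : (n : K) ≠ 0)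
    (hw : IsPeriodicPt (unicriticalMap n b) h w) (hh : 0 < h) {m : ℕ} (hm : m ≠ 0)
    (hμ : multiplier n b h w ^ m = 1) : v b ≤ 1 := by
  by_contra! hb
  have hvμ : v (multiplier n b h w) = 1 :=
    (pow_eq_one_iff_left hm).1 (by rw [← v.map_pow, hμ, v.map_one])
  have : v (multiplier n b h w) ^ n = (v b ^ (n - 1)) ^ h := by
    simp only [multiplier, map_prod, v.map_pow, ← Finset.prod_pow, ← pow_mul, mul_comm (n - 1) n]
    simp only [pow_mul, pow_valuation_eq_of_isPeriodicPt v hn hn0 hb (hw.apply_iterate _) hh,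
      Finset.prod_const, Finset.card_range]
  rw [hvμ, one_pow] at this
  exact (one_lt_pow₀ (one_lt_pow₀ hb (by omega)) hh.ne').ne this

def IsParabolic (n : ℕ) (b : K) : Prop :=
  ∃ (w₀ : K) (h₀ : ℕ), 0 < h₀ ∧ IsPeriodicPt (unicriticalMap n b) h₀ w₀ ∧
    ∃ m : ℕ, 0 < m ∧ multiplier n b h₀ w₀ ^ m = 1

namespace IsParabolic

lemma valuation_le_one (hp : IsParabolic n b) (hn : 2 ≤ n) (hn0 : (n : K) ≠ 0) : v b ≤ 1 := by
  obtain ⟨w₀, h₀, hh₀, hw₀, m, hm, hμ⟩ := hp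
  exact valuation_le_one_of_multiplier_pow_eq_one v hn hn0 hw₀ hh₀ hm.ne' hμ

lemma isIntegral (hp : IsParabolic n b) (hn : 2 ≤ n) (hn0 : (n : K) ≠ 0) : IsIntegral ℤ b :=
  isIntegral_int_of_forall_mem_valuationSubring fun V =>
    (V.valuation_le_one_iff b).1 (hp.valuation_le_one V.valuation hn hn0)

lemma isIntegral_of_isPeriodicPt (hp : IsParabolic n b) (hn : 2 ≤ n) (hn0 : (n : K) ≠ 0)
    (hw : IsPeriodicPt (unicriticalMap n b) h w) (hh : 0 < h) :
    IsIntegral ℤ w :=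
  isIntegral_int_of_forall_mem_valuationSubring fun V =>
    (V.valuation_le_one_iff w).1 <| valuation_le_one_of_isPeriodicPt V.valuation hn hn0
      (hp.valuation_le_one V.valuation hn hn0) hw hh

lemma isIntegral_multiplier (hp : IsParabolic n b) (hn : 2 ≤ n) (hn0 : (n : K) ≠ 0)
    (hw : IsPeriodicPt (unicriticalMap n b) h w) (hh : 0 < h) :
    IsIntegral ℤ (multiplier n b h w) :=
  IsIntegral.prod _ fun j _ =>
    (hp.isIntegral_of_isPeriodicPt hn hn0 (hw.apply_iterate j) hh).pow _

end IsParabolic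

end

theorem stmt3 (n : ℕ) (hn : 2 ≤ n) (b : ℂ) (g : ℂ → ℂ)
    (hg : g = fun z : ℂ => (z ^ n + b) / n)
    (hpar : ∃ (w₀ : ℂ) (h₀ : ℕ), 1 ≤ h₀ ∧ g^[h₀] w₀ = w₀ ∧
      ∃ m : ℕ, 1 ≤ m ∧ (∏ j ∈ Finset.range h₀, (g^[j] w₀) ^ (n - 1)) ^ m = 1) :
    IsIntegral ℤ b ∧ IsIntegral ℤ (b ^ (n - 1)) ∧
      ∀ (w : ℂ) (h : ℕ), 1 ≤ h → g^[h] w = w →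
        IsIntegral ℤ w ∧
          IsIntegral ℤ (∏ j ∈ Finset.range h, (g^[j] w) ^ (n - 1)) := by
  obtain rfl : g = unicriticalMap n b := hg
  have hp : IsParabolic n b := hpar
  have hn0 : (n : ℂ) ≠ 0 := by exact_mod_cast (by omega : n ≠ 0)
  have hb := hp.isIntegral hn hn0
  exact ⟨hb, hb.pow _, fun w h hh hw =>
    ⟨hp.isIntegral_of_isPeriodicPt hn hn0 hw hh, hp.isIntegral_multiplier hn hn0 hw hh⟩⟩
end

section
/- Let n ≥ 2 be an integer, b ∈ ℂ, and let w ∈ ℂ satisfy g_b^{∘h}(w) = w for some h ≥ 1. Then w is integral over the subring ℤ[b] of ℂ, and b is integral over the subring ℤ[w] of ℂ. -/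
/-! Clearing denominators, `n ^ c_k * g_b^[k] w` with `c_k = 1 + n + ⋯ + n ^ (k - 1)` is
a polynomial in `w` over `ℤ[b]`, monic of degree `n ^ k`, and also a polynomial in `b` over
`ℤ[w]`, monic of degree `n ^ (k - 1)` for `k ≥ 1`. For a period `h ≥ 1` the relation
`n ^ c_h * g_b^[h] w = n ^ c_h * w` is therefore a monic equation for `w` over `ℤ[b]` (since
`n ^ h > 1`) and for `b` over `ℤ[w]`. -/

open Polynomial Function

def denomExp (n : ℕ) : ℕ → ℕ
  | 0 => 0
  | k + 1 => n * denomExp n k + 1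

section Iterates

variable {K : Type*} [Field K] {n : ℕ}

lemma denomExp_mul_iterate_succ (hn : (n : K) ≠ 0) (β w : K) (k : ℕ) :
    (n : K) ^ denomExp n (k + 1) * (fun z => (z ^ n + β) / n)^[k + 1] w =
      ((n : K) ^ denomExp n k * (fun z => (z ^ n + β) / n)^[k] w) ^ n +
        (n : K) ^ (n * denomExp n k) * β := by
  rw [iterate_succ_apply', denomExp]
  field_simp
  ring

end Iterates

namespace Polynomial

variable {R : Type*} [CommRing R]

lemma Monic.pow_add_of_natDegree_lt [Nontrivial R] {p q : R[X]} (hp : p.Monic) (n : ℕ)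
    (hq : q.natDegree < n * p.natDegree) :
    (p ^ n + q).Monic ∧ (p ^ n + q).natDegree = n * p.natDegree := by
  have hlt : q.degree < (p ^ n).degree := degree_lt_degree (by rwa [hp.natDegree_pow])
  exact ⟨(hp.pow n).add_of_left hlt,
    by rw [natDegree_add_eq_left_of_degree_lt hlt, hp.natDegree_pow]⟩

variable (n : ℕ)

noncomputable def iteratePolyInPoint (b : R) : ℕ → R[X]
  | 0 => X
  | k + 1 => iteratePolyInPoint b k ^ n + C ((n : R) ^ (n * denomExp n k) * b)

noncomputable def iteratePolyInParam (w : R) : ℕ → R[X]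
  | 0 => C w
  | k + 1 => iteratePolyInParam w k ^ n + C ((n : R) ^ (n * denomExp n k)) * X

variable {n}

lemma iteratePolyInPoint_monic [Nontrivial R] (hn : 0 < n) (b : R) (k : ℕ) :
    (iteratePolyInPoint n b k).Monic ∧ (iteratePolyInPoint n b k).natDegree = n ^ k := by
  induction k with
  | zero => exact ⟨monic_X, natDegree_X⟩
  | succ k ih =>
    rw [pow_succ', ← ih.2]
    refine ih.1.pow_add_of_natDegree_lt n ?_
    rw [natDegree_C, ih.2]
    positivity

lemma iteratePolyInParam_succ_monic [Nontrivial R] (hn : 2 ≤ n) (w : R) (k : ℕ) :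
    (iteratePolyInParam n w (k + 1)).Monic ∧
      (iteratePolyInParam n w (k + 1)).natDegree = n ^ k := by
  induction k with
  | zero =>
    have h1 : iteratePolyInParam n w 1 = X + C (w ^ n) := by
      simp [iteratePolyInParam, denomExp, add_comm]
    rw [h1]
    exact ⟨monic_X_add_C _, natDegree_X_add_C _⟩
  | succ k ih =>
    rw [pow_succ', ← ih.2]
    refine ih.1.pow_add_of_natDegree_lt n ?_
    rw [ih.2, ← pow_succ']
    calc _ ≤ 1 := (natDegree_C_mul_le _ _).trans natDegree_X_le
      _ < n ^ (k + 1) := Nat.one_lt_pow (by omega) (by omega)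

section Field

variable {K : Type*} [Field K] [Algebra R K]

lemma aeval_iteratePolyInPoint (hn : (n : K) ≠ 0) (b : R) (w : K) (k : ℕ) :
    aeval w (iteratePolyInPoint n b k) =
      (n : K) ^ denomExp n k * (fun z => (z ^ n + algebraMap R K b) / n)^[k] w := by
  induction k with
  | zero => simp [iteratePolyInPoint, denomExp]
  | succ k ih =>
    rw [denomExp_mul_iterate_succ hn, ← ih, iteratePolyInPoint]
    simp

lemma aeval_iteratePolyInParam (hn : (n : K) ≠ 0) (w : R) (b : K) (k : ℕ) :
    aeval b (iteratePolyInParam n w k) =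
      (n : K) ^ denomExp n k * (fun z => (z ^ n + b) / n)^[k] (algebraMap R K w) := by
  induction k with
  | zero => simp [iteratePolyInParam, denomExp]
  | succ k ih =>
    rw [denomExp_mul_iterate_succ hn, ← ih, iteratePolyInParam]
    simp

end Field

end Polynomial

variable {R K : Type*} [CommRing R] [Field K] [Algebra R K] {n h : ℕ}

theorem isIntegral_of_isPeriodicPt (hn : 2 ≤ n) (hnK : (n : K) ≠ 0) (hh : 0 < h) {b : R} {w : K}
    (hw : IsPeriodicPt (fun z => (z ^ n + algebraMap R K b) / n) h w) : IsIntegral R w := by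
  have := (algebraMap R K).domain_nontrivial
  obtain ⟨hmonic, hdeg⟩ := iteratePolyInPoint_monic (by omega : 0 < n) b h
  refine ⟨iteratePolyInPoint n b h - C ((n : R) ^ denomExp n h) * X, hmonic.sub_of_left ?_, ?_⟩
  · refine degree_lt_degree ?_
    rw [hdeg]
    calc _ ≤ 1 := (natDegree_C_mul_le _ _).trans natDegree_X_le
      _ < n ^ h := Nat.one_lt_pow hh.ne' (by omega)
  · rw [← aeval_def, map_sub, aeval_iteratePolyInPoint hnK, hw.eq]
    simp

theorem isIntegral_param_of_isPeriodicPt (hn : 2 ≤ n) (hnK : (n : K) ≠ 0) (hh : 0 < h) {w : R}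
    {b : K} (hw : IsPeriodicPt (fun z => (z ^ n + b) / n) h (algebraMap R K w)) :
    IsIntegral R b := by
  have := (algebraMap R K).domain_nontrivial
  obtain ⟨k, rfl⟩ : ∃ k, h = k + 1 := ⟨h - 1, by omega⟩
  obtain ⟨hmonic, hdeg⟩ := iteratePolyInParam_succ_monic hn w k
  refine ⟨iteratePolyInParam n w (k + 1) - C ((n : R) ^ denomExp n (k + 1) * w),
    hmonic.sub_of_left ?_, ?_⟩
  · refine degree_lt_degree ?_
    rw [hdeg, natDegree_C]
    positivity
  · rw [← aeval_def, map_sub, aeval_iteratePolyInParam hnK, hw.eq]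
    simp

theorem stmt5 (n : ℕ) (hn : 2 ≤ n) (b : ℂ) (g : ℂ → ℂ)
    (hg : g = fun z : ℂ => (z ^ n + b) / n)
    (w : ℂ) (h : ℕ) (hh : 1 ≤ h) (hper : g^[h] w = w) :
    IsIntegral ↥(Algebra.adjoin ℤ ({b} : Set ℂ)) w ∧
      IsIntegral ↥(Algebra.adjoin ℤ ({w} : Set ℂ)) b := by
  subst hg
  have hnC : (n : ℂ) ≠ 0 := by exact_mod_cast (by omega : n ≠ 0)
  let b' : Algebra.adjoin ℤ ({b} : Set ℂ) := ⟨b, Algebra.self_mem_adjoin_singleton ℤ b⟩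
  let w' : Algebra.adjoin ℤ ({w} : Set ℂ) := ⟨w, Algebra.self_mem_adjoin_singleton ℤ w⟩
  exact ⟨isIntegral_of_isPeriodicPt (b := b') hn hnC hh hper,
    isIntegral_param_of_isPeriodicPt (w := w') hn hnC hh hper⟩
end

section
/- Fix an integer n ≥ 2, and define integers N_k by N_1 = n and N_{k+1} = n·N_kⁿ. Then for every k ≥ 1 there exists a polynomial P_k in two variables b, w with integer coefficients such that: (i) for all b, w ∈ ℂ one has g_b^{∘k}(w) = P_k(b,w)/N_k; (ii) regarded as a polynomial in w with coefficients in ℤ[b], P_k is monic of degree n^k; and (iii) regarded as a polynomial in b with coefficients in ℤ[w], P_k is monic of degree n^{k-1}. -/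
/-!
Clearing denominators in `g_b(P / N) = (P ^ n + N ^ n b) / (n N ^ n)` gives the recursion
`P_{k+1} = P_k ^ n + N_k ^ n b`, `N_{k+1} = n N_k ^ n`, starting from `P_0 = w`, `N_0 = 1`.
The added term `N_k ^ n b` has `w`-degree `0`, so monicity in `w` propagates from `P_0`; it has
`b`-degree `1`, which for `n ≥ 2` is below the `b`-degree of `P_k ^ n` once `k ≥ 1`, so
monicity in `b` propagates from `P_1 = w ^ n + b`.
-/

/-- Evaluate a bivariate integer polynomial (an element of `(ℤ[b])[w]`, with the
inner variable `b` and outer variable `w`) at the complex numbers `x` (inner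
variable) and `y` (outer variable). -/
noncomputable def evalBW (x y : ℂ) (P : Polynomial (Polynomial ℤ)) : ℂ :=
  Polynomial.eval₂ (Polynomial.eval₂RingHom (Int.castRingHom ℂ) x) y P

open Polynomial Polynomial.Bivariate

theorem evalBW_eq_aevalAeval (x y : ℂ) (P : ℤ[X][Y]) : evalBW x y P = aevalAeval x y P := by
  change eval₂RingHom (eval₂RingHom (Int.castRingHom ℂ) x) y P = (aevalAeval x y).toRingHom P
  congr 1
  refine ringHom_ext (fun p => ?_) (by simp)
  simp only [coe_eval₂RingHom, eval₂_C, AlgHom.toRingHom_eq_coe, RingHom.coe_coe, aevalAeval_C,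
    aeval_def, algebraMap_int_eq]

theorem evalBW_swap (x y : ℂ) (P : ℤ[X][Y]) : evalBW y x (swap P) = evalBW x y P := by
  rw [evalBW_eq_aevalAeval, evalBW_eq_aevalAeval, aevalAeval_swap]

theorem evalBW_pow_add_C_C_mul_X (x y : ℂ) (P : ℤ[X][Y]) (n : ℕ) (c : ℤ) :
    evalBW x y (P ^ n + C (C c * X)) = evalBW x y P ^ n + c * x := by
  simp [evalBW_eq_aevalAeval]

namespace Polynomial.Monic

variable {R : Type*} [Semiring R] [Nontrivial R] {p q : R[X]} {n : ℕ}

theorem pow_add_of_degree_lt (hp : p.Monic) (hq : q.degree < ↑(n * p.natDegree)) :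
    (p ^ n + q).Monic :=
  (hp.pow n).add_of_left (by rwa [degree_eq_natDegree (hp.pow n).ne_zero, hp.natDegree_pow])

theorem natDegree_pow_add_of_degree_lt (hp : p.Monic) (hq : q.degree < ↑(n * p.natDegree)) :
    (p ^ n + q).natDegree = n * p.natDegree := by
  rw [natDegree_add_eq_left_of_degree_lt (by rwa [degree_eq_natDegree (hp.pow n).ne_zero,
    hp.natDegree_pow]), hp.natDegree_pow]

end Polynomial.Monic

def iterDen (n : ℕ) : ℕ → ℤ
  | 0 => 1
  | k + 1 => n * iterDen n k ^ n

noncomputable def iterNum (n : ℕ) : ℕ → ℤ[X][Y]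
  | 0 => Y
  | k + 1 => iterNum n k ^ n + C (C (iterDen n k ^ n) * X)

section

variable {n : ℕ}

theorem iterDen_ne_zero (hn : n ≠ 0) (k : ℕ) : iterDen n k ≠ 0 := by
  induction k with
  | zero => exact one_ne_zero
  | succ k ih => exact mul_ne_zero (by exact_mod_cast hn) (pow_ne_zero n ih)

theorem iterate_eq_evalBW_iterNum_div (hn : n ≠ 0) (b w : ℂ) (k : ℕ) :
    (fun z : ℂ => (z ^ n + b) / n)^[k] w = evalBW b w (iterNum n k) / iterDen n k := by
  induction k with
  | zero => simp [iterNum, iterDen, evalBW]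
  | succ k ih =>
    have hN : (iterDen n k : ℂ) ≠ 0 := by exact_mod_cast iterDen_ne_zero hn k
    rw [Function.iterate_succ_apply', ih, iterNum, iterDen, evalBW_pow_add_C_C_mul_X, div_pow]
    field_simp
    push_cast
    ring

theorem iterNum_monic_natDegree (hn : n ≠ 0) (k : ℕ) :
    (iterNum n k).Monic ∧ (iterNum n k).natDegree = n ^ k := by
  induction k with
  | zero => exact ⟨monic_X, by simp [iterNum]⟩
  | succ k ih =>
    have hdeg : (C (C (iterDen n k ^ n) * X)).degree < ↑(n * (iterNum n k).natDegree) :=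
      degree_C_le.trans_lt (by rw [ih.2]; exact_mod_cast by positivity)
    rw [iterNum, pow_succ', ← ih.2]
    exact ⟨ih.1.pow_add_of_degree_lt hdeg, ih.1.natDegree_pow_add_of_degree_lt hdeg⟩

theorem swap_iterNum_succ (k : ℕ) :
    swap (iterNum n (k + 1)) = swap (iterNum n k) ^ n + C (C (iterDen n k ^ n)) * Y := by
  simp [iterNum, swap_X]

theorem swap_iterNum_monic_natDegree (hn : 2 ≤ n) (k : ℕ) :
    (swap (iterNum n (k + 1))).Monic ∧ (swap (iterNum n (k + 1))).natDegree = n ^ k := by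
  induction k with
  | zero =>
    rw [swap_iterNum_succ, iterNum, iterDen, swap_Y, one_pow, map_one, map_one, one_mul, ← C_pow,
      add_comm]
    exact ⟨monic_X_add_C _, natDegree_X_add_C _⟩
  | succ k ih =>
    have hlt : 1 < n * n ^ k := by nlinarith [Nat.one_le_pow k n (by omega)]
    have hdeg : (C (C (iterDen n (k + 1) ^ n)) * Y).degree
        < ↑(n * (swap (iterNum n (k + 1))).natDegree) :=
      (degree_C_mul_X_le _).trans_lt (by rw [ih.2]; exact_mod_cast hlt)
    rw [swap_iterNum_succ, pow_succ', ← ih.2]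
    exact ⟨ih.1.pow_add_of_degree_lt hdeg, ih.1.natDegree_pow_add_of_degree_lt hdeg⟩

theorem iterDen_eq_of_rec {N : ℕ → ℂ} (hN1 : N 1 = n)
    (hNrec : ∀ k, 1 ≤ k → N (k + 1) = n * N k ^ n) (k : ℕ) (hk : 1 ≤ k) : N k = iterDen n k := by
  induction k, hk using Nat.le_induction with
  | base => simp [hN1, iterDen]
  | succ k hk ih => simp [hNrec k hk, ih, iterDen]

end

theorem stmt6 (n : ℕ) (hn : 2 ≤ n) (N : ℕ → ℂ) (hN1 : N 1 = n)
    (hNrec : ∀ k, 1 ≤ k → N (k + 1) = n * (N k) ^ n) :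
    ∀ k, 1 ≤ k → ∃ P : Polynomial (Polynomial ℤ),
      -- (i) for all `b, w ∈ ℂ`, `g_b^{∘k}(w) = P_k(b, w) / N_k`
      (∀ b w : ℂ, (fun z : ℂ => (z ^ n + b) / n)^[k] w = evalBW b w P / N k) ∧
      -- (ii) as a polynomial in `w` over `ℤ[b]`, `P_k` is monic of degree `n ^ k`
      P.Monic ∧ P.natDegree = n ^ k ∧
      -- (iii) as a polynomial in `b` over `ℤ[w]` (i.e. with the variables swapped),
      -- `P_k` is monic of degree `n ^ (k - 1)`
      ∃ Q : Polynomial (Polynomial ℤ),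
        (∀ b w : ℂ, evalBW w b Q = evalBW b w P) ∧
        Q.Monic ∧ Q.natDegree = n ^ (k - 1) := by
  intro k hk
  obtain ⟨j, rfl⟩ := Nat.exists_eq_add_of_le' hk
  have hn0 : n ≠ 0 := by omega
  obtain ⟨hP_monic, hP_deg⟩ := iterNum_monic_natDegree hn0 (j + 1)
  obtain ⟨hQ_monic, hQ_deg⟩ := swap_iterNum_monic_natDegree hn j
  refine ⟨iterNum n (j + 1), fun b w => ?_, hP_monic, hP_deg,
    swap (iterNum n (j + 1)), fun b w => evalBW_swap b w _, hQ_monic, hQ_deg⟩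
  rw [iterDen_eq_of_rec hN1 hNrec (j + 1) hk, iterate_eq_evalBW_iterNum_div hn0]
end

section
/- Let n ≥ 2 be an integer, let b be a nonzero algebraic integer, and let w be a periodic point of g_b of period h ≥ 1 whose multiplier μ = ∏_{j=0}^{h-1} (g_b^{∘j}(w))^{n-1} is a root of unity. Then n^h − μ lies in the ideal b·𝒪, where 𝒪 is the ring of all algebraic integers; that is, (n^h − μ)/b is an algebraic integer. -/
/-!
Write `w_j = g_b^{∘j}(w)`, so that `n w_{j+1} = w_jⁿ + b`. Clearing denominators in
`g_b^{∘h}(w) = w` gives a monic equation for `w` of degree `nʰ` over `𝒪`, so every `w_j` is an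
algebraic integer. With `P = ∏ w_j` and periodicity of the orbit,
`μ P = ∏ w_jⁿ = ∏ (n w_{j+1} - b) = ∏ (n w_j - b) ≡ nʰ P (mod b𝒪)`,
and `P` is a unit of `𝒪` because `μ = P^{n-1}` is a root of unity; cancelling `P` gives the claim.
-/

open Polynomial Finset

section Integrality

variable {R K : Type*} [CommRing R] [Nontrivial R] [CommRing K] [Algebra R K]

theorem exists_monic_aeval_eq_mul_of_recurrence {a b : R} {n : ℕ} (hn : n ≠ 0) {v : ℕ → K}
    (hv : ∀ j, algebraMap R K a * v (j + 1) = v j ^ n + algebraMap R K b) (j : ℕ) :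
    ∃ p : R[X], p.Monic ∧ p.natDegree = n ^ j ∧
      ∃ c : R, aeval (v 0) p = algebraMap R K c * v j := by
  induction j with
  | zero => exact ⟨X, monic_X, by simp, 1, by simp⟩
  | succ j ih =>
    obtain ⟨p, hmon, hdeg, c, hc⟩ := ih
    have hdeg_pow : (p ^ n).natDegree = n ^ (j + 1) := by
      rw [hmon.natDegree_pow, hdeg, pow_succ']
    refine ⟨p ^ n + C (c ^ n * b), ?_, by rw [natDegree_add_C, hdeg_pow], c ^ n * a, ?_⟩
    · refine (hmon.pow n).add_of_left (degree_C_le.trans_lt ?_)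
      rw [degree_eq_natDegree (hmon.pow n).ne_zero, hdeg_pow]
      exact_mod_cast pow_pos (Nat.pos_of_ne_zero hn) _
    · simp only [map_add, map_pow, aeval_C, map_mul, hc, mul_assoc, hv]
      ring

theorem isIntegral_of_recurrence {a b : R} {n h : ℕ} (hn : 2 ≤ n) (hh : 1 ≤ h) {v : ℕ → K}
    (hv : ∀ j, algebraMap R K a * v (j + 1) = v j ^ n + algebraMap R K b) (hper : v h = v 0) :
    IsIntegral R (v 0) := by
  obtain ⟨p, hmon, hdeg, c, hc⟩ := exists_monic_aeval_eq_mul_of_recurrence (by omega) hv h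
  refine ⟨p - C c * X, hmon.sub_of_left ((degree_C_mul_X_le c).trans_lt ?_), ?_⟩
  · rw [degree_eq_natDegree hmon.ne_zero, hdeg]
    exact_mod_cast Nat.one_lt_pow (by omega) hn
  · rw [← aeval_def, map_sub, hc, hper]
    simp

end Integrality

theorem Finset.prod_range_add_one_eq_prod_range {M : Type*} [CommMonoid M] {f : ℕ → M} {h : ℕ}
    (hf : f h = f 0) : ∏ j ∈ range h, f (j + 1) = ∏ j ∈ range h, f j := by
  cases h with
  | zero => simp
  | succ k => rw [prod_range_succ, hf, prod_range_succ']

theorem dvd_pow_sub_prod_pow_of_recurrence {S : Type*} [CommRing S] {a b : S} {n h : ℕ}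
    (hn : 2 ≤ n) {v : ℕ → S} (hv : ∀ j, a * v (j + 1) = v j ^ n + b) (hper : v h = v 0)
    (hunit : IsUnit (∏ j ∈ range h, v j ^ (n - 1))) :
    b ∣ a ^ h - ∏ j ∈ range h, v j ^ (n - 1) := by
  set P := ∏ j ∈ range h, v j
  have hPunit : IsUnit P := by rwa [prod_pow, isUnit_pow_iff (by omega)] at hunit
  have hμP : (∏ j ∈ range h, v j ^ (n - 1)) * P = ∏ j ∈ range h, (a * v j - b) := by
    rw [← prod_mul_distrib,
      ← prod_range_add_one_eq_prod_range (f := fun j => a * v j - b) (by rw [hper])]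
    refine prod_congr rfl fun j _ => ?_
    rw [← pow_succ, Nat.sub_add_cancel (by omega), hv]
    ring
  let π := Ideal.Quotient.mk (Ideal.span {b})
  have hmod : π (∏ j ∈ range h, (a * v j - b)) = π (a ^ h * P) := by
    simp only [π, P, map_prod, map_sub, map_mul, map_pow, Ideal.Quotient.mk_singleton_self,
      sub_zero, prod_mul_distrib, prod_const, card_range]
  rw [← Ideal.mem_span_singleton, ← Ideal.Quotient.eq, ← (hPunit.map π).mul_left_inj,
    ← map_mul, ← map_mul, hμP, hmod]

theorem stmt7 (n : ℕ) (hn : 2 ≤ n) (b : ℂ) (hb0 : b ≠ 0) (hb : IsIntegral ℤ b)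
    (g : ℂ → ℂ) (hg : g = fun z : ℂ => (z ^ n + b) / n)
    (w : ℂ) (h : ℕ) (hh : 1 ≤ h) (hper : g^[h] w = w)
    (μ : ℂ) (hμ : μ = ∏ j ∈ Finset.range h, (g^[j] w) ^ (n - 1))
    (hroot : ∃ m : ℕ, 1 ≤ m ∧ μ ^ m = 1) :
    IsIntegral ℤ (((n : ℂ) ^ h - μ) / b) := by
  have hrec (z : ℂ) (j : ℕ) : (n : ℂ) * g^[j + 1] z = (g^[j] z) ^ n + b := by
    have hn0 : (n : ℂ) ≠ 0 := by exact_mod_cast (by omega : n ≠ 0)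
    rw [Function.iterate_succ_apply', hg, mul_div_cancel₀ _ hn0]
  have hint (j : ℕ) : IsIntegral ℤ (g^[j] w) := by
    have hperj : g^[h] (g^[j] w) = g^[j] w := by
      rw [← Function.iterate_add_apply, add_comm, Function.iterate_add_apply, hper]
    refine isIntegral_trans (R := ℤ) (A := integralClosure ℤ ℂ) _ <|
      isIntegral_of_recurrence (a := (n : integralClosure ℤ ℂ)) (b := ⟨b, hb⟩) hn hh
        (v := fun i => g^[i] (g^[j] w)) (fun i => ?_) hperj
    simpa using hrec (g^[j] w) i
  let v (j : ℕ) : integralClosure ℤ ℂ := ⟨g^[j] w, hint j⟩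
  obtain ⟨m, hm, hμm⟩ := hroot
  have hunit : IsUnit (∏ j ∈ Finset.range h, v j ^ (n - 1)) := by
    refine IsUnit.of_pow_eq_one (Subtype.ext ?_) (n := m) (by omega)
    simpa [v, hμ] using hμm
  have hv (j : ℕ) : (n : integralClosure ℤ ℂ) * v (j + 1) = v j ^ n + ⟨b, hb⟩ :=
    Subtype.ext (by simpa [v] using hrec w j)
  obtain ⟨c, hc⟩ := dvd_pow_sub_prod_pow_of_recurrence hn hv (Subtype.ext hper) hunit
  have hc' : (n : ℂ) ^ h - μ = b * c := by simpa [v, hμ] using congrArg Subtype.val hc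
  rw [hc', mul_div_cancel_left₀ _ hb0]
  exact c.2
end

section
/- Let n ≥ 2 be an integer, let b be a nonzero algebraic integer, and let w be a periodic point of g_b of period h ≥ 1 whose multiplier μ = ∏_{j=0}^{h-1} (g_b^{∘j}(w))^{n-1} is a primitive m-th root of unity. Set r = h·m. Then n^r − 1 lies in the ideal b·𝒪, where 𝒪 is the ring of all algebraic integers; that is, (n^r − 1)/b is an algebraic integer. -/
/-!
Clearing denominators, `n^d · g^[k](z)` is a monic polynomial of degree `n^k` in `z` with
coefficients in `ℤ[b, n]`, so a periodic point of `g` is a root of a monic polynomial and the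
whole cycle consists of algebraic integers `w₀, …, w_{h-1}`. Modulo `b` the map becomes
`n · g(z) ≡ zⁿ`; multiplying around the cycle gives `nʰ W ≡ Wⁿ` for `W = ∏ wⱼ`, where `W` is a
unit because `Wⁿ⁻¹ = μ` is a root of unity. Hence `nʰ ≡ μ` and `n^{hm} ≡ μᵐ = 1 (mod b)`.
-/

open Polynomial Finset

section Integrality

variable {R S : Type*} [CommRing R] [Nontrivial R] [CommRing S] [Algebra R S]

theorem exists_monic_aeval_eq_pow_mul_iterate {n : ℕ} (hn : n ≠ 0) {c b : R} {f : S → S}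
    (hf : ∀ z, algebraMap R S c * f z = z ^ n + algebraMap R S b) (k : ℕ) :
    ∃ (P : R[X]) (d : ℕ), P.Monic ∧ P.natDegree = n ^ k ∧
      ∀ z, aeval z P = algebraMap R S c ^ d * f^[k] z := by
  induction k with
  | zero => exact ⟨X, 0, monic_X, by simp, by simp⟩
  | succ k ih =>
    obtain ⟨P, d, hP, hdeg, heval⟩ := ih
    have hdeg_pow : (P ^ n).natDegree = n ^ (k + 1) := by
      rw [hP.natDegree_pow, hdeg, pow_succ']
    refine ⟨P ^ n + C (b * c ^ (n * d)), n * d + 1, ?_, by rw [natDegree_add_C, hdeg_pow], ?_⟩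
    · refine (hP.pow n).add_of_left (degree_lt_degree ?_)
      rw [natDegree_C, hdeg_pow]
      positivity
    · intro z
      rw [map_add, map_pow, heval, aeval_C, Function.iterate_succ_apply', map_mul, map_pow,
        pow_succ, mul_assoc, hf, pow_mul]
      ring

theorem isIntegral_of_isPeriodicPt_s8 {n h : ℕ} (hn : 2 ≤ n) (hh : h ≠ 0) {c b : R} {f : S → S}
    (hf : ∀ z, algebraMap R S c * f z = z ^ n + algebraMap R S b) {z : S}
    (hz : Function.IsPeriodicPt f h z) : IsIntegral R z := by
  obtain ⟨P, d, hP, hdeg, heval⟩ := exists_monic_aeval_eq_pow_mul_iterate (by omega) hf h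
  refine ⟨P - C (c ^ d) * X, hP.sub_of_left (degree_lt_degree ?_), ?_⟩
  · calc (C (c ^ d) * X).natDegree ≤ 1 := natDegree_C_mul_le _ _ |>.trans natDegree_X_le
      _ < P.natDegree := hdeg ▸ Nat.one_lt_pow hh (by omega)
  · rw [← aeval_def, map_sub, heval, hz.eq, map_mul, aeval_C, aeval_X, map_pow, sub_self]

end Integrality

section CycleProduct

variable {M : Type*} [CommMonoid M]

theorem Finset.prod_range_succ_eq_of_eq {x : ℕ → M} {h : ℕ} (hper : x h = x 0) :
    ∏ j ∈ range h, x (j + 1) = ∏ j ∈ range h, x j := by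
  cases h with
  | zero => simp
  | succ k => rw [prod_range_succ, hper, prod_range_succ']

theorem pow_mul_prod_range_eq_prod_range_pow {a : M} {x : ℕ → M} {n h : ℕ}
    (hx : ∀ j, a * x (j + 1) = x j ^ n) (hper : x h = x 0) :
    a ^ h * ∏ j ∈ range h, x j = (∏ j ∈ range h, x j) ^ n := by
  calc a ^ h * ∏ j ∈ range h, x j = ∏ j ∈ range h, a * x (j + 1) := by
        rw [prod_mul_distrib, prod_const, card_range, prod_range_succ_eq_of_eq hper]
    _ = (∏ j ∈ range h, x j) ^ n := by rw [prod_congr rfl fun j _ => hx j, prod_pow]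

theorem pow_mul_eq_one_of_mul_succ_eq_pow {a : M} {x : ℕ → M} {n h m : ℕ} (hn : 2 ≤ n)
    (hm : m ≠ 0) (hx : ∀ j, a * x (j + 1) = x j ^ n) (hper : x h = x 0)
    (hW : ((∏ j ∈ range h, x j) ^ (n - 1)) ^ m = 1) : a ^ (h * m) = 1 := by
  set W := ∏ j ∈ range h, x j
  have hWunit : IsUnit W := IsUnit.of_pow_eq_one (by rwa [pow_mul]) (Nat.mul_ne_zero (by omega) hm)
  have hah : a ^ h = W ^ (n - 1) := by
    apply hWunit.mul_left_inj.mp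
    rw [pow_mul_prod_range_eq_prod_range_pow hx hper, ← pow_succ, Nat.sub_add_cancel (by omega)]
  rw [pow_mul, hah, hW]

end CycleProduct

theorem isIntegral_div_of_dvd {R K : Type*} [CommRing R] [Field K] [Algebra R K]
    {a b : integralClosure R K} (hb : (b : K) ≠ 0) (hab : b ∣ a) : IsIntegral R ((a : K) / b) := by
  obtain ⟨t, rfl⟩ := hab
  rw [MulMemClass.coe_mul, mul_div_cancel_left₀ _ hb]
  exact t.2

theorem stmt8 (n : ℕ) (hn : 2 ≤ n) (b : ℂ) (hb0 : b ≠ 0) (hb : IsIntegral ℤ b)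
    (g : ℂ → ℂ) (hg : g = fun z : ℂ => (z ^ n + b) / n)
    (w : ℂ) (h : ℕ) (hh : 1 ≤ h) (hper : g^[h] w = w)
    (μ : ℂ) (hμ : μ = ∏ j ∈ Finset.range h, (g^[j] w) ^ (n - 1))
    (m : ℕ) (hm : 1 ≤ m) (hprim : IsPrimitiveRoot μ m)
    (r : ℕ) (hr : r = h * m) :
    IsIntegral ℤ (((n : ℂ) ^ r - 1) / b) := by
  let A := integralClosure ℤ ℂ
  let bA : A := ⟨b, hb⟩
  have hgn : ∀ z, algebraMap A ℂ n * g z = z ^ n + algebraMap A ℂ bA := fun z => by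
    simp [hg, bA, mul_div_cancel₀, show (n : ℂ) ≠ 0 by norm_cast; omega]
  have horbit (j : ℕ) : IsIntegral ℤ (g^[j] w) :=
    isIntegral_trans _ <|
      isIntegral_of_isPeriodicPt_s8 hn (by omega) hgn (Function.IsPeriodicPt.apply_iterate hper j)
  let q := Ideal.Quotient.mk (Ideal.span {bA})
  let x (j : ℕ) : A ⧸ Ideal.span {bA} := q ⟨g^[j] w, horbit j⟩
  have hx (j : ℕ) : q n * x (j + 1) = x j ^ n := by
    have : (n : A) * ⟨g^[j + 1] w, horbit _⟩ = ⟨g^[j] w, horbit j⟩ ^ n + bA :=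
      Subtype.ext <| by simpa [Function.iterate_succ_apply'] using hgn (g^[j] w)
    have hq : q bA = 0 := (Ideal.Quotient.eq_zero_iff_dvd _ _).mpr dvd_rfl
    simpa only [map_mul, map_add, map_pow, map_natCast, hq, add_zero] using congrArg q this
  have hW : ((∏ j ∈ range h, x j) ^ (n - 1)) ^ m = 1 := by
    have hμA : ((∏ j ∈ range h, (⟨g^[j] w, horbit j⟩ : A)) ^ (n - 1)) ^ m = 1 :=
      Subtype.ext <| by simpa [hμ, prod_pow] using hprim.pow_eq_one
    simpa only [x, ← map_prod, ← map_pow, map_one] using congrArg q hμA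
  have hdvd : bA ∣ (n : A) ^ r - 1 := by
    rw [← Ideal.Quotient.eq_zero_iff_dvd, map_sub, map_pow, map_one, hr,
      pow_mul_eq_one_of_mul_succ_eq_pow hn (by omega) hx (by simp [x, hper]) hW, sub_self]
  simpa [bA] using isIntegral_div_of_dvd hb0 hdvd
end

section
/- Let n ≥ 2 be an integer, let b be a nonzero algebraic integer, and let w be a periodic point of g_b of period h ≥ 1 whose multiplier μ = ∏_{j=0}^{h-1} (g_b^{∘j}(w))^{n-1} is a primitive m-th root of unity. Set r = h·m and let d̂ be the degree of the minimal polynomial of b^{n-1} over ℤ. Then the constant coefficient of the minimal polynomial of b^{n-1} over ℤ divides (n^r − 1)^{(n-1)·d̂} in ℤ; equivalently, Norm(b^{n-1}) divides (n^r − 1)^{(n-1)·d̂}. -/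
/-!
The orbit `z₀, …, z_{r-1}` of `w` (run through `m` times, so `r = h m`) consists of algebraic
integers, since `n^c z` is a monic polynomial in `z` of degree `n^h ≥ 2`. Put `P = ∏ zⱼ`; as
`∏ zⱼ^(n-1) = μ^m = 1`, `P` is a unit and `∏ zⱼ^n = P`. From `n z_{j+1} = zⱼ^n + b` we get
`∏ (zⱼ^n + b) = n^r P`, and reducing mod `b` gives `b ∣ (n^r - 1) P`, hence `b ∣ n^r - 1` among
algebraic integers. So `b^(n-1) t = C := (n^r - 1)^(n-1)` with `t` integral, and the reversed,
rescaled minimal polynomial of `t` has root `b^(n-1)` and constant coefficient a power `C^k`,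
`k ≤ deg b^(n-1)`; it is a multiple of the minimal polynomial of `b^(n-1)`, which yields the
divisibility of constant coefficients.
-/

open Polynomial Finset Function

theorem dvd_prod_add_sub_prod {ι R : Type*} [CommRing R] (s : Finset ι) (f : ι → R) (b : R) :
    b ∣ ∏ i ∈ s, (f i + b) - ∏ i ∈ s, f i := by
  rw [← Ideal.mem_span_singleton, ← Ideal.Quotient.eq]
  simp [map_prod]

theorem Finset.prod_range_cyclic_shift {M : Type*} [CommMonoid M] {f : ℕ → M} {r : ℕ}
    (hf : f r = f 0) : ∏ j ∈ range r, f (j + 1) = ∏ j ∈ range r, f j := by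
  cases r with
  | zero => rfl
  | succ k => rw [prod_range_succ, hf, ← prod_range_succ']

theorem Function.Periodic.prod_range_mul {M : Type*} [CommMonoid M] {f : ℕ → M} {h : ℕ}
    (hf : Periodic f h) (m : ℕ) : ∏ j ∈ range (h * m), f j = (∏ j ∈ range h, f j) ^ m := by
  induction m with
  | zero => simp
  | succ m ih =>
    rw [Nat.mul_succ, prod_range_add, ih, pow_succ]
    congr 1
    refine prod_congr rfl fun j _ => ?_
    rw [add_comm, mul_comm]
    exact hf.nat_mul m j

theorem dvd_pow_sub_one_of_orbit {S : Type*} [CommRing S] {n r : ℕ} (hn : 2 ≤ n) {b : S}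
    {W : ℕ → S} (hstep : ∀ j, (n : S) * W (j + 1) = W j ^ n + b) (hr : W r = W 0)
    (hmul : ∏ j ∈ range r, W j ^ (n - 1) = 1) : b ∣ (n : S) ^ r - 1 := by
  set P := ∏ j ∈ range r, W j
  have hP : IsUnit P := .of_pow_eq_one (by rw [← prod_pow, hmul]) (by omega)
  have hpow : ∏ j ∈ range r, W j ^ n = P := by
    simp_rw [← pow_sub_one_mul (by omega : n ≠ 0)]
    rw [prod_mul_distrib, hmul, one_mul]
  have hadd : ∏ j ∈ range r, (W j ^ n + b) = n ^ r * P := by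
    simp_rw [← hstep]
    rw [prod_mul_distrib, prod_const, card_range, prod_range_cyclic_shift hr]
  rw [← hP.dvd_mul_right, sub_one_mul, ← hadd, ← hpow]
  exact dvd_prod_add_sub_prod _ _ b

theorem aeval_scaleRoots_reverse_eq_zero {R K : Type*} [CommRing R] [Field K] [Algebra R K]
    {p : R[X]} {x : K} (hx : x ≠ 0) (hp : aeval x p = 0) (c : R) :
    aeval (algebraMap R K c * x⁻¹) (p.reverse.scaleRoots c) = 0 := by
  have : Invertible x := invertibleOfNonzero hx
  apply scaleRoots_aeval_eq_zero
  rw [aeval_def, ← invOf_eq_inv, eval₂_reverse_eq_zero_iff, ← aeval_def, hp]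

section IntegrallyClosed

variable {R K : Type*} [CommRing R] [IsDomain R] [IsIntegrallyClosed R] [Field K] [Algebra R K]
  [Module.IsTorsionFree R K]

theorem minpoly_dvd_scaleRoots_reverse {x y : K} (hx : IsIntegral R x) (hy : y ≠ 0) {c : R}
    (hxy : x * y = algebraMap R K c) :
    minpoly R x ∣ (minpoly R y).reverse.scaleRoots c := by
  refine minpoly.isIntegrallyClosed_dvd hx ?_
  simpa [← hxy, hy] using aeval_scaleRoots_reverse_eq_zero hy (minpoly.aeval R y) c

theorem minpoly_coeff_zero_dvd_pow {x y : K} (hx : IsIntegral R x) (hy : IsIntegral R y) {c : R}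
    (hc : c ≠ 0) (hxy : x * y = algebraMap R K c) :
    (minpoly R x).coeff 0 ∣ c ^ (minpoly R x).natDegree := by
  have hc' : algebraMap R K c ≠ 0 :=
    (map_ne_zero_iff _ (FaithfulSMul.algebraMap_injective R K)).mpr hc
  have hx0 : x ≠ 0 := left_ne_zero_of_mul (hxy ▸ hc')
  have hy0 : y ≠ 0 := right_ne_zero_of_mul (hxy ▸ hc')
  have hyx : y * x = algebraMap R K c := by rw [mul_comm, hxy]
  have hrev_ne : ∀ z : K, IsIntegral R z → (minpoly R z).reverse.scaleRoots c ≠ 0 := fun z hz =>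
    scaleRoots_ne_zero (reverse_eq_zero.not.mpr (minpoly.ne_zero hz)) c
  have hdeg : (minpoly R y).natDegree ≤ (minpoly R x).natDegree := calc
    _ ≤ ((minpoly R x).reverse.scaleRoots c).natDegree :=
      natDegree_le_of_dvd (minpoly_dvd_scaleRoots_reverse hy hx0 hyx) (hrev_ne x hx)
    _ ≤ (minpoly R x).natDegree := by rw [natDegree_scaleRoots]; exact reverse_natDegree_le _
  obtain ⟨q, hq⟩ := minpoly_dvd_scaleRoots_reverse hx hy0 hxy
  have hcoeff :
      ((minpoly R y).reverse.scaleRoots c).coeff 0 = c ^ (minpoly R y).reverse.natDegree := by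
    simp [coeff_zero_reverse, (minpoly.monic hy).leadingCoeff]
  refine Dvd.intro (q.coeff 0) ?_ |>.trans (pow_dvd_pow c ((reverse_natDegree_le _).trans hdeg))
  rw [← mul_coeff_zero, ← hq, hcoeff]

end IntegrallyClosed

theorem exists_monic_aeval_eq_pow_mul_iterate_s10 {A K : Type*} [CommRing A] [Nontrivial A]
    [CommRing K] [Algebra A K] {n : ℕ} (hn : n ≠ 0) {b : A} {g : K → K}
    (hg : ∀ u, (n : K) * g u = u ^ n + algebraMap A K b) (z : K) (j : ℕ) :
    ∃ (c : ℕ) (p : A[X]), p.Monic ∧ p.natDegree = n ^ j ∧ aeval z p = (n : K) ^ c * g^[j] z := by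
  induction j with
  | zero => exact ⟨0, X, monic_X, by simp, by simp⟩
  | succ j ih =>
    obtain ⟨c, p, hp, hdeg, heval⟩ := ih
    have hpn : (p ^ n).natDegree = n ^ (j + 1) := by rw [hp.natDegree_pow, hdeg, pow_succ']
    refine ⟨n * c + 1, p ^ n + C ((n : A) ^ (n * c) * b), ?_, ?_, ?_⟩
    · refine (hp.pow n).add_of_left (degree_C_le.trans_lt ?_)
      rw [degree_eq_natDegree (hp.pow n).ne_zero, hpn]
      exact_mod_cast Nat.pos_of_ne_zero (pow_ne_zero _ hn)
    · rw [natDegree_add_C, hpn]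
    · rw [map_add, map_pow, heval, aeval_C, iterate_succ_apply', pow_succ, mul_assoc, hg]
      simp only [map_mul, map_pow, map_natCast]
      ring

theorem Function.IsPeriodicPt.isIntegral {R K : Type*} [CommRing R] [CommRing K] [Algebra R K]
    {n h : ℕ} (hn : 2 ≤ n) {b : K} (hb : IsIntegral R b) {g : K → K}
    (hg : ∀ u, (n : K) * g u = u ^ n + b) {z : K} (hh : 0 < h) (hz : IsPeriodicPt g h z) :
    IsIntegral R z := by
  nontriviality K
  obtain ⟨c, p, hp, hdeg, heval⟩ := exists_monic_aeval_eq_pow_mul_iterate_s10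
    (A := integralClosure R K) (b := ⟨b, hb⟩) (by omega) hg z h
  refine isIntegral_trans (A := integralClosure R K) z
    ⟨p - C ((n : integralClosure R K) ^ c) * X, ?_, ?_⟩
  · refine hp.sub_of_left ((degree_C_mul_X_le _).trans_lt ?_)
    rw [degree_eq_natDegree hp.ne_zero, hdeg]
    exact_mod_cast Nat.one_lt_pow hh.ne' (by omega)
  · rw [← aeval_def, map_sub, heval, hz.eq, map_mul, aeval_C, aeval_X, map_pow, map_natCast,
      sub_self]

theorem stmt10_general (n : ℕ) (hn : 2 ≤ n) (b : ℂ) (hb : IsIntegral ℤ b)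
    (g : ℂ → ℂ) (hg : g = fun z : ℂ => (z ^ n + b) / n)
    (w : ℂ) (h : ℕ) (hh : 1 ≤ h) (hper : g^[h] w = w)
    (μ : ℂ) (hμ : μ = ∏ j ∈ Finset.range h, (g^[j] w) ^ (n - 1))
    (m : ℕ) (hm : 1 ≤ m) (hprim : IsPrimitiveRoot μ m)
    (r : ℕ) (hr : r = h * m)
    (dh : ℕ) (hd : dh = (minpoly ℤ (b ^ (n - 1))).natDegree) :
    (minpoly ℤ (b ^ (n - 1))).coeff 0 ∣ ((n : ℤ) ^ r - 1) ^ ((n - 1) * dh) := by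
  have hstep : ∀ u, (n : ℂ) * g u = u ^ n + b := fun u => by
    have : (n : ℂ) ≠ 0 := by exact_mod_cast (by omega : n ≠ 0)
    rw [hg]; field_simp
  have horbit : Periodic (fun j => g^[j] w) h := fun j => by
    simp only [iterate_add_apply, hper]
  have hint (j : ℕ) : IsIntegral ℤ (g^[j] w) :=
    IsPeriodicPt.isIntegral hn hb hstep (by omega) (IsPeriodicPt.apply_iterate hper j)
  let W (j : ℕ) : integralClosure ℤ ℂ := ⟨g^[j] w, hint j⟩
  have hdvd : (⟨b, hb⟩ : integralClosure ℤ ℂ) ∣ (n : integralClosure ℤ ℂ) ^ r - 1 := by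
    refine dvd_pow_sub_one_of_orbit hn (W := W) (fun j => Subtype.ext ?_) (Subtype.ext ?_)
      (Subtype.ext ?_)
    · simpa [W, iterate_succ_apply'] using hstep (g^[j] w)
    · simpa [W, hr] using (IsPeriodicPt.mul_const (f := g) hper m).eq
    · have := (horbit.comp (· ^ (n - 1))).prod_range_mul m
      simp only [comp_def, ← hμ] at this
      simpa [W, hr, this] using hprim.pow_eq_one
  obtain ⟨t, ht⟩ := pow_dvd_pow_of_dvd hdvd (n - 1)
  rw [hd, pow_mul]
  refine minpoly_coeff_zero_dvd_pow (hb.pow _) t.2 ?_ ?_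
  · refine pow_ne_zero _ (sub_ne_zero.mpr (one_lt_pow₀ ?_ ?_).ne')
    · exact_mod_cast (by omega : 1 < n)
    · rw [hr]; exact (Nat.mul_pos hh hm).ne'
  · simpa using (congrArg Subtype.val ht).symm

theorem stmt10 (n : ℕ) (hn : 2 ≤ n) (b : ℂ) (hb0 : b ≠ 0) (hb : IsIntegral ℤ b)
    (g : ℂ → ℂ) (hg : g = fun z : ℂ => (z ^ n + b) / n)
    (w : ℂ) (h : ℕ) (hh : 1 ≤ h) (hper : g^[h] w = w)
    (μ : ℂ) (hμ : μ = ∏ j ∈ Finset.range h, (g^[j] w) ^ (n - 1))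
    (m : ℕ) (hm : 1 ≤ m) (hprim : IsPrimitiveRoot μ m)
    (r : ℕ) (hr : r = h * m)
    (dh : ℕ) (hd : dh = (minpoly ℤ (b ^ (n - 1))).natDegree) :
    (minpoly ℤ (b ^ (n - 1))).coeff 0 ∣ ((n : ℤ) ^ r - 1) ^ ((n - 1) * dh) :=
  stmt10_general n hn b hb g hg w h hh hper μ hμ m hm hprim r hr dh hd
end

section
/- Let n ≥ 2 be an integer, let b be an algebraic integer, and let w be a periodic point of g_b of period h ≥ 1 with multiplier μ = ∏_{j=0}^{h-1} (g_b^{∘j}(w))^{n-1} (so that w, μ, and b^{n-1} are also algebraic integers). If any one of the four numbers w, μ, b, b^{n-1} is prime to n, then all four of them are prime to n. -/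
/-!
Work in the ring `𝒪` of algebraic integers. Clearing denominators in `n * z (j + 1) = z j ^ n + b`
shows that `n ^ e * z (i + h)` is a monic polynomial of degree `n ^ h ≥ 2` in `z i`; periodicity
then makes every orbit point a root of a monic polynomial over `𝒪`, hence an algebraic integer.
Modulo `n` the recurrence reads `z j ^ n ≡ -b`, so each orbit point is prime to `n` exactly when
`b` is, and `μ` (a nonempty product of powers of orbit points) and `b ^ (n - 1)` follow.
-/

/-- An algebraic integer `x` is *prime to* `n` if `x·𝒪 + n·𝒪 = 𝒪`, i.e. there are
algebraic integers `s`, `t` with `x·s + n·t = 1`. -/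
def PrimeTo (n : ℕ) (x : ℂ) : Prop :=
  ∃ s t : ℂ, IsIntegral ℤ s ∧ IsIntegral ℤ t ∧ x * s + (n : ℂ) * t = 1

open Polynomial Finset

local notation "𝒪" => integralClosure ℤ ℂ

theorem primeTo_iff_isCoprime (n : ℕ) (x : 𝒪) : PrimeTo n x ↔ IsCoprime x (n : 𝒪) := by
  constructor
  · rintro ⟨s, t, hs, ht, e⟩
    exact ⟨⟨s, hs⟩, ⟨t, ht⟩, Subtype.ext (by push_cast; linear_combination e)⟩
  · rintro ⟨s, t, e⟩
    exact ⟨s, t, s.2, t.2, by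
      have := congrArg Subtype.val e; push_cast at this; linear_combination this⟩

section Recurrence

variable {R : Type*} [CommRing R] {n : ℕ} {N B : R} {z : ℕ → R}

theorem isCoprime_iff_of_mul_succ_eq (hrec : ∀ j, N * z (j + 1) = z j ^ n + B) (hn : n ≠ 0)
    (j : ℕ) : IsCoprime (z j) N ↔ IsCoprime B N := by
  rw [show B = -z j ^ n + N * z (j + 1) by rw [hrec]; ring, IsCoprime.add_mul_left_left_iff,
    IsCoprime.neg_left_iff, IsCoprime.pow_left_iff (Nat.pos_of_ne_zero hn)]

theorem isCoprime_prod_pow_iff_of_mul_succ_eq (hrec : ∀ j, N * z (j + 1) = z j ^ n + B)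
    (hn : 2 ≤ n) {h : ℕ} (hh : h ≠ 0) :
    IsCoprime (∏ j ∈ range h, z j ^ (n - 1)) N ↔ IsCoprime B N := by
  simp only [IsCoprime.prod_left_iff, IsCoprime.pow_left_iff (show 0 < n - 1 by omega),
    isCoprime_iff_of_mul_succ_eq hrec (show n ≠ 0 by omega)]
  exact ⟨fun H => H 0 (by simp [Nat.pos_of_ne_zero hh]), fun H _ _ => H⟩

end Recurrence

section Integrality

variable {R A : Type*} [CommRing R] [Nontrivial R] [CommRing A] [Algebra R A]
  {n : ℕ} {N B : R} {z : ℕ → A}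

theorem exists_monic_aeval_eq_pow_mul
    (hrec : ∀ j, algebraMap R A N * z (j + 1) = z j ^ n + algebraMap R A B) (hn : 0 < n)
    (i j : ℕ) : ∃ P : R[X], P.Monic ∧ P.natDegree = n ^ j ∧
      ∃ e : ℕ, aeval (z i) P = algebraMap R A (N ^ e) * z (i + j) := by
  induction j with
  | zero => exact ⟨X, monic_X, natDegree_X, 0, by simp⟩
  | succ j ih =>
    obtain ⟨P, hP, hdeg, e, he⟩ := ih
    have hPn : (P ^ n).natDegree = n ^ (j + 1) := by rw [hP.natDegree_pow, hdeg, pow_succ, mul_comm]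
    refine ⟨P ^ n + C (N ^ (n * e) * B), (hP.pow n).add_of_left ?_, ?_, n * e + 1, ?_⟩
    · refine degree_C_le.trans_lt ?_
      rw [degree_eq_natDegree (hP.pow n).ne_zero, hPn]
      exact_mod_cast pow_pos hn (j + 1)
    · rw [natDegree_add_C, hPn]
    · rw [map_add, map_pow, he, aeval_C, ← add_assoc]
      simp only [map_mul, map_pow]
      linear_combination -algebraMap R A N ^ (n * e) * hrec (i + j)

theorem isIntegral_of_periodic_of_mul_succ_eq
    (hrec : ∀ j, algebraMap R A N * z (j + 1) = z j ^ n + algebraMap R A B) (hn : 2 ≤ n)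
    {h : ℕ} (hper : Function.Periodic z h) (hh : h ≠ 0) (i : ℕ) : IsIntegral R (z i) := by
  obtain ⟨P, hP, hdeg, e, he⟩ := exists_monic_aeval_eq_pow_mul hrec (by omega) i h
  refine ⟨P - C (N ^ e) * X, hP.sub_of_left ((degree_C_mul_X_le _).trans_lt ?_), ?_⟩
  · rw [degree_eq_natDegree hP.ne_zero, hdeg]
    exact_mod_cast Nat.one_lt_pow hh (by omega)
  · rw [← aeval_def, map_sub, he, hper i, map_mul, aeval_C, aeval_X, sub_self]

end Integrality

theorem stmt12 (n : ℕ) (hn : 2 ≤ n) (b : ℂ) (hb : IsIntegral ℤ b)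
    (g : ℂ → ℂ) (hg : g = fun z : ℂ => (z ^ n + b) / n)
    (w : ℂ) (h : ℕ) (hh : 1 ≤ h) (hper : g^[h] w = w)
    (μ : ℂ) (hμ : μ = ∏ j ∈ Finset.range h, (g^[j] w) ^ (n - 1))
    (hone : PrimeTo n w ∨ PrimeTo n μ ∨ PrimeTo n b ∨ PrimeTo n (b ^ (n - 1))) :
    PrimeTo n w ∧ PrimeTo n μ ∧ PrimeTo n b ∧ PrimeTo n (b ^ (n - 1)) := by
  have hrec (j : ℕ) : (n : ℂ) * g^[j + 1] w = (g^[j] w) ^ n + b := by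
    rw [Function.iterate_succ_apply', hg]
    field_simp [show (n : ℂ) ≠ 0 by norm_cast; omega]
  have hperiodic : Function.Periodic (fun j => g^[j] w) h := fun j => by
    simp only [Function.iterate_add_apply, hper]
  have hint (j : ℕ) : IsIntegral ℤ (g^[j] w) :=
    isIntegral_trans _ <| isIntegral_of_periodic_of_mul_succ_eq (R := 𝒪) (N := n) (B := ⟨b, hb⟩)
      (by simpa using hrec) hn hperiodic (by omega) j
  set z : ℕ → 𝒪 := fun j => ⟨g^[j] w, hint j⟩
  set B : 𝒪 := ⟨b, hb⟩
  have hrecO (j : ℕ) : (n : 𝒪) * z (j + 1) = z j ^ n + B :=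
    Subtype.ext <| by push_cast [z, B]; exact hrec j
  obtain rfl : μ = ((∏ j ∈ range h, z j ^ (n - 1) : 𝒪) : ℂ) := by simp [hμ, z]
  change PrimeTo n (z 0) ∨ _ ∨ PrimeTo n B ∨ PrimeTo n ((B ^ (n - 1) : 𝒪) : ℂ) at hone
  change PrimeTo n (z 0) ∧ _ ∧ PrimeTo n B ∧ PrimeTo n ((B ^ (n - 1) : 𝒪) : ℂ)
  simp only [primeTo_iff_isCoprime, isCoprime_iff_of_mul_succ_eq hrecO (by omega : n ≠ 0),
    isCoprime_prod_pow_iff_of_mul_succ_eq hrecO hn (by omega : h ≠ 0),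
    IsCoprime.pow_left_iff (show 0 < n - 1 by omega)] at hone ⊢
  tauto
end

section
/- Let n ≥ 2 be an integer and c ∈ ℂ, and let z be a periodic point of f_c of period h ≥ 1. Then z is an algebraic integer if and only if c is an algebraic integer; and in this case the multiplier μ = ∏_{j=0}^{h-1} n·(f_c^{∘j}(z))^{n-1} of the orbit lies in the ideal n^h·𝒪, where 𝒪 is the ring of all algebraic integers, i.e., μ/n^h is an algebraic integer. -/
/-!
Iterating `p ↦ p ^ n + r` on a monic polynomial of positive degree, with `deg r ≤ 1`, keeps it
monic and multiplies its degree by `n`. Read as a polynomial in `z` over `ℤ[c]` (start from `X`,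
add `C c`), the relation `f_c^[h] z = z` is then a monic equation of degree `n ^ h ≥ 2` for `z`;
read as a polynomial in `c` over `ℤ[z]` (start from `f_c z = X + C (z ^ n)`, add `X`), it is a
monic equation of degree `n ^ (h - 1)` for `c`. Transitivity of integrality gives both
implications. Finally `μ / n ^ h` is the product of the `(n - 1)`-st powers of the orbit points,
which are algebraic integers.
-/

open Polynomial

section IteratedPowAdd

variable {R : Type*} [CommRing R] {n : ℕ} {q r : R[X]}

theorem Polynomial.Monic.pow_add_of_natDegree_le_one (hq : q.Monic) (hq1 : 1 ≤ q.natDegree)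
    (hn : 2 ≤ n) (hr : r.natDegree ≤ 1) :
    (q ^ n + r).Monic ∧ (q ^ n + r).natDegree = n * q.natDegree := by
  have hlt : r.degree < (q ^ n).degree :=
    degree_lt_degree (by rw [hq.natDegree_pow]; nlinarith)
  exact ⟨(hq.pow n).add_of_left hlt,
    by rw [natDegree_add_eq_left_of_degree_lt hlt, hq.natDegree_pow]⟩

theorem Polynomial.Monic.iterate_pow_add (hq : q.Monic) (hq1 : 1 ≤ q.natDegree) (hn : 2 ≤ n)
    (hr : r.natDegree ≤ 1) (k : ℕ) :
    ((fun p => p ^ n + r)^[k] q).Monic ∧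
      ((fun p => p ^ n + r)^[k] q).natDegree = n ^ k * q.natDegree := by
  induction k with
  | zero => simpa using hq
  | succ k ih =>
    obtain ⟨hmon, hdeg⟩ := ih
    have hpos : 1 ≤ n ^ k * q.natDegree := Nat.one_le_iff_ne_zero.mpr
      (mul_ne_zero (pow_ne_zero _ (by omega)) (by omega))
    rw [Function.iterate_succ_apply', pow_succ', mul_assoc, ← hdeg]
    exact hmon.pow_add_of_natDegree_le_one (hdeg ▸ hpos) hn hr

theorem aeval_iterate_pow_add {S : Type*} [CommRing S] [Algebra R S] (x : S) (k : ℕ) :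
    aeval x ((fun p => p ^ n + r)^[k] q) = (fun y => y ^ n + aeval x r)^[k] (aeval x q) :=
  (Function.Semiconj.iterate_right (f := aeval x) (fun p => by simp) k) q

theorem isIntegral_of_aeval_iterate_pow_add_eq {S : Type*} [CommRing S] [Algebra R S] {s : R[X]}
    (hq : q.Monic) (hq1 : 1 ≤ q.natDegree) (hn : 2 ≤ n) (hr : r.natDegree ≤ 1) {k : ℕ}
    (hs : s.natDegree < n ^ k * q.natDegree) {x : S}
    (hx : aeval x ((fun p => p ^ n + r)^[k] q) = aeval x s) : IsIntegral R x := by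
  obtain ⟨hmon, hdeg⟩ := hq.iterate_pow_add hq1 hn hr k
  exact ⟨_, hmon.sub_of_left (degree_lt_degree (hdeg ▸ hs)),
    by rw [← aeval_def, map_sub, hx, sub_self]⟩

end IteratedPowAdd

theorem IsIntegral.iterate_pow_add {R S : Type*} [CommRing R] [CommRing S] [Algebra R S]
    {n : ℕ} {c z : S} (hc : IsIntegral R c) (hz : IsIntegral R z) (j : ℕ) :
    IsIntegral R ((fun x => x ^ n + c)^[j] z) := by
  induction j with
  | zero => exact hz
  | succ j ih =>
    rw [Function.iterate_succ_apply']
    exact (ih.pow n).add hc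

section Periodic

variable {R S : Type*} [CommRing R] [CommRing S] [Algebra R S] {n h : ℕ} {c z : S}

theorem isIntegral_of_isPeriodicPt_pow_add (hn : 2 ≤ n) (hh : 1 ≤ h)
    (hper : Function.IsPeriodicPt (fun x => x ^ n + c) h z) (hc : IsIntegral R c) :
    IsIntegral R z := by
  nontriviality S
  let c' : integralClosure R S := ⟨c, hc⟩
  refine isIntegral_trans (A := integralClosure R S) z
    (isIntegral_of_aeval_iterate_pow_add_eq (q := X) (r := C c') (s := X) (k := h)
      monic_X (by rw [natDegree_X]) hn (by rw [natDegree_C]; omega) ?_ ?_)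
  · rw [natDegree_X, mul_one]; exact Nat.one_lt_pow (by omega) (by omega)
  · rw [aeval_iterate_pow_add]
    simpa [c'] using hper.eq

theorem isIntegral_const_of_isPeriodicPt_pow_add (hn : 2 ≤ n) (hh : 1 ≤ h)
    (hper : Function.IsPeriodicPt (fun x => x ^ n + c) h z) (hz : IsIntegral R z) :
    IsIntegral R c := by
  nontriviality S
  let z' : integralClosure R S := ⟨z, hz⟩
  obtain ⟨k, rfl⟩ : ∃ k, h = k + 1 := ⟨h - 1, by omega⟩
  refine isIntegral_trans (A := integralClosure R S) c
    (isIntegral_of_aeval_iterate_pow_add_eq (q := X + C (z' ^ n)) (r := X) (s := C z') (k := k)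
      (monic_X_add_C _) (by rw [natDegree_X_add_C]) hn natDegree_X_le ?_ ?_)
  · rw [natDegree_X_add_C, natDegree_C, mul_one]; positivity
  · rw [aeval_iterate_pow_add]
    simpa [z', add_comm, Function.iterate_succ_apply] using hper.eq

end Periodic

theorem stmt13 (n : ℕ) (hn : 2 ≤ n) (c : ℂ)
    (f : ℂ → ℂ) (hf : f = fun z : ℂ => z ^ n + c)
    (z : ℂ) (h : ℕ) (hh : 1 ≤ h) (hper : f^[h] z = z)
    (μ : ℂ) (hμ : μ = ∏ j ∈ Finset.range h, (n : ℂ) * (f^[j] z) ^ (n - 1)) :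
    (IsIntegral ℤ z ↔ IsIntegral ℤ c) ∧
      (IsIntegral ℤ c → IsIntegral ℤ (μ / (n : ℂ) ^ h)) := by
  subst hf hμ
  have hzc : IsIntegral ℤ z ↔ IsIntegral ℤ c :=
    ⟨isIntegral_const_of_isPeriodicPt_pow_add hn hh hper,
      isIntegral_of_isPeriodicPt_pow_add hn hh hper⟩
  refine ⟨hzc, fun hc => ?_⟩
  rw [Finset.prod_mul_distrib, Finset.prod_const, Finset.card_range,
    mul_div_cancel_left₀ _ (pow_ne_zero _ (Nat.cast_ne_zero.mpr (by omega)))]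
  exact IsIntegral.prod _ fun j _ => (hc.iterate_pow_add (hzc.mpr hc) j).pow (n - 1)
end

section
/- Let n ≥ 2 be an integer and c ∈ ℂ with c ≠ 0. If the forward orbit of the critical point 0 under f_c is finite (i.e., 0 is eventually periodic under f_c), then c and ĉ = c^{n-1} are algebraic integers, and the constant coefficient of the minimal polynomial of ĉ over ℤ divides n in ℤ; equivalently, Norm(ĉ) divides n. -/
/-!
Write `ĉ = c ^ (n - 1)`. Every point of the critical orbit has the form
`f_c^[k] 0 = c * B_k(ĉ)` for integer polynomials `B_k = orbitPoly n k` with `B_k(0) = 1`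
(`k ≥ 1`) that are monic of strictly increasing degree. Hence `ĉ` is a root of the monic
`B_{t+h} - B_t`, so `ĉ` and then `c` are algebraic integers. If the orbit is not purely periodic
it has a collision: two distinct orbit points `c * γ ≠ c * β` with the same image, i.e.
`γ ^ n = β ^ n`; then `ĉ` is a root of `∑ B_{s+h}^i B_s^(n-1-i)`, whose constant term is `n`.
In the purely periodic case `ĉ` is a root of `B_h`, whose constant term is `1`. The minimal
polynomial of `ĉ` divides either polynomial, so its constant term divides `n`.
-/

open Polynomial Finset

theorem Function.iterate_eq_self_or_exists_collision {α : Type*} (f : α → α) (x : α) (h : ℕ) :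
    ∀ t, f^[t + h] x = f^[t] x →
      f^[h] x = x ∨ ∃ s, f^[s + h] x ≠ f^[s] x ∧ f (f^[s + h] x) = f (f^[s] x)
  | 0, hper => by simpa using Or.inl hper
  | t + 1, hper => by
    by_cases heq : f^[t + h] x = f^[t] x
    · exact iterate_eq_self_or_exists_collision f x h t heq
    · refine Or.inr ⟨t, heq, ?_⟩
      rwa [Nat.add_right_comm, iterate_succ_apply', iterate_succ_apply'] at hper

theorem minpoly_coeff_zero_dvd_coeff_zero {R S : Type*} [CommRing R] [IsDomain R]
    [IsIntegrallyClosed R] [CommRing S] [IsDomain S] [Algebra R S] [Module.IsTorsionFree R S]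
    {x : S} (hx : IsIntegral R x) {p : R[X]} (hp : aeval x p = 0) :
    (minpoly R x).coeff 0 ∣ p.coeff 0 := by
  obtain ⟨q, rfl⟩ := minpoly.isIntegrallyClosed_dvd hx hp
  rw [mul_coeff_zero]
  exact dvd_mul_right _ _

theorem geom_sum₂_eq_zero_of_pow_eq_pow {R : Type*} [CommRing R] [IsDomain R] {x y : R}
    (hne : x ≠ y) {n : ℕ} (hpow : x ^ n = y ^ n) :
    ∑ i ∈ range n, x ^ i * y ^ (n - 1 - i) = 0 := by
  have h := geom_sum₂_mul x y n
  rw [hpow, sub_self] at h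
  exact (mul_eq_zero.mp h).resolve_right (sub_ne_zero.mpr hne)

namespace Polynomial

variable {R : Type*} [CommSemiring R] [Nontrivial R] {p : R[X]}

theorem Monic.natDegree_X_mul_pow (hp : p.Monic) (n : ℕ) :
    (X * p ^ n).natDegree = n * p.natDegree + 1 := by
  rw [natDegree_X_mul (hp.pow n).ne_zero, hp.natDegree_pow]

theorem Monic.degree_one_lt_degree_X_mul_pow (hp : p.Monic) (n : ℕ) :
    (1 : R[X]).degree < (X * p ^ n).degree := by
  rw [degree_one, degree_eq_natDegree (monic_X.mul (hp.pow n)).ne_zero, hp.natDegree_X_mul_pow]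
  exact_mod_cast Nat.succ_pos _

theorem Monic.X_mul_pow_add_one (hp : p.Monic) (n : ℕ) : (X * p ^ n + 1).Monic :=
  (monic_X.mul (hp.pow n)).add_of_left (hp.degree_one_lt_degree_X_mul_pow n)

theorem Monic.natDegree_X_mul_pow_add_one (hp : p.Monic) (n : ℕ) :
    (X * p ^ n + 1).natDegree = n * p.natDegree + 1 := by
  rw [natDegree_add_eq_left_of_degree_lt (hp.degree_one_lt_degree_X_mul_pow n),
    hp.natDegree_X_mul_pow]

end Polynomial

namespace Unicritical

noncomputable def orbitPoly (n : ℕ) : ℕ → ℤ[X]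
  | 0 => 0
  | k + 1 => X * orbitPoly n k ^ n + 1

variable {n : ℕ}

theorem mul_aeval_orbitPoly (hn : n ≠ 0) (c : ℂ) :
    ∀ k, c * aeval (c ^ (n - 1)) (orbitPoly n k) = (fun z : ℂ => z ^ n + c)^[k] 0
  | 0 => by simp [orbitPoly]
  | k + 1 => by
    rw [Function.iterate_succ_apply', ← mul_aeval_orbitPoly hn c k]
    simp only [orbitPoly, map_add, map_mul, map_pow, aeval_X, map_one]
    have hcn : c ^ n = c * c ^ (n - 1) := by
      rw [← pow_succ', Nat.sub_add_cancel (Nat.one_le_iff_ne_zero.mpr hn)]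
    rw [mul_pow, hcn]
    ring

theorem orbitPoly_eval_zero {k : ℕ} (hk : k ≠ 0) : (orbitPoly n k).eval 0 = 1 := by
  obtain ⟨j, rfl⟩ := Nat.exists_eq_succ_of_ne_zero hk
  simp [orbitPoly]

theorem monic_orbitPoly_succ (hn : n ≠ 0) (k : ℕ) : (orbitPoly n (k + 1)).Monic := by
  induction k with
  | zero => simp [orbitPoly, hn]
  | succ k ih => exact ih.X_mul_pow_add_one n

theorem natDegree_orbitPoly_lt (hn : n ≠ 0) {j k : ℕ} (hj : j ≠ 0) (hjk : j < k) :
    (orbitPoly n j).natDegree < (orbitPoly n k).natDegree := by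
  have hmono : StrictMono fun m => (orbitPoly n (m + 1)).natDegree :=
    strictMono_nat_of_lt_succ fun m => by
      change _ < (X * orbitPoly n (m + 1) ^ n + 1).natDegree
      rw [(monic_orbitPoly_succ hn m).natDegree_X_mul_pow_add_one]
      nlinarith [Nat.one_le_iff_ne_zero.mpr hn]
  obtain ⟨j, rfl⟩ := Nat.exists_eq_succ_of_ne_zero hj
  obtain ⟨k, rfl⟩ := Nat.exists_eq_succ_of_ne_zero (by omega : k ≠ 0)
  exact hmono (by omega)

theorem monic_orbitPoly_sub (hn : n ≠ 0) {j k : ℕ} (hjk : j < k) :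
    (orbitPoly n k - orbitPoly n j).Monic := by
  obtain ⟨k, rfl⟩ := Nat.exists_eq_succ_of_ne_zero (by omega : k ≠ 0)
  rcases eq_or_ne j 0 with rfl | hj
  · simpa [orbitPoly] using monic_orbitPoly_succ hn k
  · refine (monic_orbitPoly_succ hn k).sub_of_left (degree_lt_degree ?_)
    exact natDegree_orbitPoly_lt hn hj hjk

variable {c : ℂ}

theorem aeval_orbitPoly_eq_zero_of_iterate_eq_zero (hn : n ≠ 0) (hc : c ≠ 0) {h : ℕ}
    (hper : (fun z : ℂ => z ^ n + c)^[h] 0 = 0) : aeval (c ^ (n - 1)) (orbitPoly n h) = 0 := by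
  rw [← mul_aeval_orbitPoly hn c] at hper
  exact (mul_eq_zero.mp hper).resolve_left hc

theorem aeval_geom_sum₂_orbitPoly_eq_zero (hn : n ≠ 0) (hc : c ≠ 0) {j k : ℕ}
    (hne : (fun z : ℂ => z ^ n + c)^[k] 0 ≠ (fun z : ℂ => z ^ n + c)^[j] 0)
    (hpow : ((fun z : ℂ => z ^ n + c)^[k] 0) ^ n = ((fun z : ℂ => z ^ n + c)^[j] 0) ^ n) :
    aeval (c ^ (n - 1))
      (∑ i ∈ range n, orbitPoly n k ^ i * orbitPoly n j ^ (n - 1 - i)) = 0 := by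
  simp only [map_sum, map_mul, map_pow]
  rw [← mul_aeval_orbitPoly hn c, ← mul_aeval_orbitPoly hn c] at hne hpow
  refine geom_sum₂_eq_zero_of_pow_eq_pow (fun h => hne (by rw [h])) ?_
  rw [mul_pow, mul_pow] at hpow
  exact mul_left_cancel₀ (pow_ne_zero n hc) hpow

theorem coeff_zero_geom_sum₂_orbitPoly {j k : ℕ} (hj : j ≠ 0) (hk : k ≠ 0) :
    (∑ i ∈ range n, orbitPoly n k ^ i * orbitPoly n j ^ (n - 1 - i)).coeff 0 = n := by
  rw [coeff_zero_eq_eval_zero, ← coe_evalRingHom, RingHom.map_geom_sum₂, coe_evalRingHom,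
    orbitPoly_eval_zero hj, orbitPoly_eval_zero hk, geom_sum₂_self]
  simp

end Unicritical

open Unicritical in
theorem stmt14 (n : ℕ) (hn : 2 ≤ n) (c : ℂ) (hc : c ≠ 0)
    (f : ℂ → ℂ) (hf : f = fun z : ℂ => z ^ n + c)
    (hpre : ∃ (t h : ℕ), 1 ≤ h ∧ f^[t + h] 0 = f^[t] 0) :
    IsIntegral ℤ c ∧ IsIntegral ℤ (c ^ (n - 1)) ∧
      (minpoly ℤ (c ^ (n - 1))).coeff 0 ∣ (n : ℤ) := by
  subst hf
  obtain ⟨t, h, hh, hper⟩ := hpre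
  have hn0 : n ≠ 0 := by omega
  have hint : IsIntegral ℤ (c ^ (n - 1)) := by
    refine ⟨_, monic_orbitPoly_sub hn0 (by omega : t < t + h), ?_⟩
    rw [← aeval_def, map_sub, sub_eq_zero]
    exact mul_left_cancel₀ hc (by rw [mul_aeval_orbitPoly hn0, mul_aeval_orbitPoly hn0, hper])
  refine ⟨hint.of_pow (by omega), hint, ?_⟩
  rcases Function.iterate_eq_self_or_exists_collision _ 0 h t hper with hper | ⟨s, hne, hcoll⟩
  · have hdvd := minpoly_coeff_zero_dvd_coeff_zero hint
      (aeval_orbitPoly_eq_zero_of_iterate_eq_zero hn0 hc hper)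
    rw [coeff_zero_eq_eval_zero (orbitPoly n h), orbitPoly_eval_zero (by omega)] at hdvd
    exact hdvd.trans (one_dvd _)
  · have hpow := add_right_cancel hcoll
    have hs : s ≠ 0 := by
      rintro rfl
      simp only [Function.iterate_zero_apply, zero_pow hn0, pow_eq_zero_iff hn0] at hne hpow
      exact hne hpow
    have hdvd := minpoly_coeff_zero_dvd_coeff_zero hint
      (aeval_geom_sum₂_orbitPoly_eq_zero hn0 hc hne hpow)
    rwa [coeff_zero_geom_sum₂_orbitPoly hs (by omega)] at hdvd
end

section
/- Let n ≥ 2 be an integer and c ∈ ℂ, and suppose the critical point 0 is periodic under f_c of period h > 1, i.e., f_c^{∘h}(0) = 0 with h > 1 minimal. Then ĉ = c^{n-1} is a unit in the ring of all algebraic integers: both ĉ and ĉ⁻¹ are algebraic integers; equivalently, Norm(ĉ) = ±1. -/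
/-!
The parameter `c` is a root of the Gleason polynomial `G_h`, where `G_0 = 0` and
`G_{k+1} = G_k ^ n + X`; since `G_h` is monic with integer coefficients, `c` is an algebraic
integer, and hence so is `ĉ = c ^ (n - 1)`. Moreover every point of the critical orbit has the form
`c * w` with `w` integral (`w ↦ ĉ * w ^ n + 1`), so `0 = f^[h] 0 = c * (ĉ * w ^ n + 1)` with `c ≠ 0`
exhibits `-w ^ n` as an integral inverse of `ĉ`.
-/

open Polynomial

noncomputable def gleasonPoly (n : ℕ) : ℕ → ℤ[X]
  | 0 => 0
  | k + 1 => gleasonPoly n k ^ n + X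

theorem aeval_gleasonPoly {A : Type*} [CommRing A] (n : ℕ) (c : A) (k : ℕ) :
    aeval c (gleasonPoly n k) = (fun z : A => z ^ n + c)^[k] 0 := by
  induction k with
  | zero => simp [gleasonPoly]
  | succ k ih => simp [gleasonPoly, Function.iterate_succ_apply', ih]

theorem gleasonPoly_succ_monic_natDegree {n : ℕ} (hn : 2 ≤ n) (k : ℕ) :
    (gleasonPoly n (k + 1)).Monic ∧ (gleasonPoly n (k + 1)).natDegree = n ^ k := by
  induction k with
  | zero =>
    have hX : gleasonPoly n 1 = X := by simp [gleasonPoly, zero_pow (by omega : n ≠ 0)]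
    simp [hX, monic_X]
  | succ k ih =>
    obtain ⟨hmonic, hdeg⟩ := ih
    have hpow_deg : (gleasonPoly n (k + 1) ^ n).natDegree = n ^ (k + 1) := by
      rw [hmonic.natDegree_pow, hdeg, pow_succ']
    have hX_lt : (X : ℤ[X]).degree < (gleasonPoly n (k + 1) ^ n).degree := by
      rw [degree_X, degree_eq_natDegree (hmonic.pow n).ne_zero, hpow_deg]
      exact_mod_cast Nat.one_lt_pow (by omega) (by omega)
    refine ⟨(hmonic.pow n).add_of_left hX_lt, ?_⟩
    rw [gleasonPoly, natDegree_add_eq_left_of_degree_lt hX_lt, hpow_deg]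

theorem isIntegral_of_iterate_zero_eq_zero {A : Type*} [CommRing A] {n : ℕ} (hn : 2 ≤ n)
    {c : A} {k : ℕ} (hk : (fun z : A => z ^ n + c)^[k + 1] 0 = 0) : IsIntegral ℤ c :=
  ⟨gleasonPoly n (k + 1), (gleasonPoly_succ_monic_natDegree hn k).1, by
    rw [← aeval_def, aeval_gleasonPoly, hk]⟩

theorem exists_isIntegral_iterate_zero_eq_mul {A : Type*} [CommRing A] {n : ℕ} (hn : n ≠ 0)
    {c : A} (hc : IsIntegral ℤ (c ^ (n - 1))) (k : ℕ) :
    ∃ w : A, IsIntegral ℤ w ∧ (fun z : A => z ^ n + c)^[k] 0 = c * w := by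
  induction k with
  | zero => exact ⟨0, isIntegral_zero, by simp⟩
  | succ k ih =>
    obtain ⟨w, hw, hcw⟩ := ih
    refine ⟨c ^ (n - 1) * w ^ n + 1, (hc.mul (hw.pow n)).add isIntegral_one, ?_⟩
    rw [Function.iterate_succ_apply', hcw, mul_pow, ← mul_pow_sub_one hn c]
    ring

theorem isIntegral_inv_pow_of_iterate_zero_eq_zero {K : Type*} [Field K] {n : ℕ} (hn : n ≠ 0)
    {c : K} (hc0 : c ≠ 0) (hc : IsIntegral ℤ (c ^ (n - 1))) {k : ℕ}
    (hk : (fun z : K => z ^ n + c)^[k + 1] 0 = 0) : IsIntegral ℤ (c ^ (n - 1))⁻¹ := by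
  obtain ⟨w, hw, hcw⟩ := exists_isIntegral_iterate_zero_eq_mul hn hc k
  have hinv : c ^ (n - 1) * -w ^ n = 1 := by
    rw [Function.iterate_succ_apply', hcw, mul_pow, ← mul_pow_sub_one hn c] at hk
    have : c * (c ^ (n - 1) * w ^ n + 1) = 0 := by linear_combination hk
    linear_combination -(mul_eq_zero.mp this).resolve_left hc0
  rw [inv_eq_of_mul_eq_one_right hinv]
  exact (hw.pow n).neg

theorem stmt15 (n : ℕ) (hn : 2 ≤ n) (c : ℂ)
    (f : ℂ → ℂ) (hf : f = fun z : ℂ => z ^ n + c)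
    (h : ℕ) (hh : 1 < h) (hper : f^[h] 0 = 0)
    (hmin : ∀ k : ℕ, 0 < k → k < h → f^[k] 0 ≠ 0) :
    IsIntegral ℤ (c ^ (n - 1)) ∧ IsIntegral ℤ (c ^ (n - 1))⁻¹ := by
  subst hf
  obtain ⟨k, rfl⟩ : ∃ k, h = k + 1 := ⟨h - 1, by omega⟩
  have hn0 : n ≠ 0 := by omega
  have hc0 : c ≠ 0 := by simpa [zero_pow hn0] using hmin 1 one_pos hh
  have hc : IsIntegral ℤ (c ^ (n - 1)) := (isIntegral_of_iterate_zero_eq_zero hn hper).pow _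
  exact ⟨hc, isIntegral_inv_pow_of_iterate_zero_eq_zero hn0 hc0 hc hper⟩
end

section
/- Let n ≥ 2 be an integer and let c ∈ ℂ satisfy c^{n-1} = −1 (so that the critical orbit of f_c has period two). Then every periodic point z ≠ 0 of f_c is a unit in the ring of algebraic integers: both z and z⁻¹ are algebraic integers. -/
/-!
Write `𝒪` for the integral closure of `ℤ` in `ℂ` and `f(w) = wⁿ + c`. Then `c ∈ 𝒪`, being a root
of `Xⁿ⁻¹ + 1`, and a periodic point of `f` of period `h` is a root of the monic polynomial
`f^{∘h}(X) - X`, so `z ∈ 𝒪`. Since `cⁿ = -c`, `f(w) = wⁿ - cⁿ` is divisible by `w - c`; taking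
`w = f(v)` gives `vⁿ ∣ f(f(v))` in `𝒪`. Following the cycle of `f ∘ f` through `z` back to `z`
yields `z² ∣ f(f(z)) ∣ z`, so `z` is a unit of the domain `𝒪`.
-/

open Polynomial Function

namespace Polynomial

variable {R A : Type*} [CommRing R] [CommRing A] [Algebra R A] {p : R[X]}

theorem Monic.iterate_comp_X (hp : p.Monic) (hdeg : p.natDegree ≠ 0) (k : ℕ) :
    (p.comp^[k] X).Monic ∧ (p.comp^[k] X).natDegree = p.natDegree ^ k := by
  have : Nontrivial R := nontrivial_iff.mp (nontrivial_of_ne p 0 (by rintro rfl; simp at hdeg))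
  induction k with
  | zero => exact ⟨monic_X, by simp⟩
  | succ k ih =>
    obtain ⟨hmonic, hnat⟩ := ih
    rw [iterate_succ_apply']
    refine ⟨hp.comp hmonic (by simp [hnat, hdeg]), ?_⟩
    rw [natDegree_comp_eq_of_mul_ne_zero (by simp [hp.leadingCoeff, hmonic.leadingCoeff]),
      hnat, pow_succ']

theorem isIntegral_of_isPeriodicPt (hp : p.Monic) (hdeg : 2 ≤ p.natDegree) {h : ℕ} (hh : 0 < h)
    {z : A} (hz : IsPeriodicPt (fun x => aeval x p) h z) : IsIntegral R z := by
  obtain ⟨hmonic, hnat⟩ := hp.iterate_comp_X (by omega) h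
  refine ⟨p.comp^[h] X - X, hmonic.sub_of_left (degree_lt_degree ?_), ?_⟩
  · rw [hnat]
    exact natDegree_X_le.trans_lt (Nat.one_lt_pow hh.ne' (by omega))
  · have : aeval z (p.comp^[h] X) = z := by
      simpa [aeval_def] using hz.eq
    rw [← aeval_def, map_sub, this, aeval_X, sub_self]

end Polynomial

theorem pow_dvd_pow_add_pow_add {R : Type*} [CommRing R] {n : ℕ} {c : R} (hn : n ≠ 0)
    (hc : c ^ (n - 1) = -1) (v : R) : v ^ n ∣ (v ^ n + c) ^ n + c := by
  have hcn : c ^ n = -c := by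
    rw [← Nat.sub_add_cancel (Nat.one_le_iff_ne_zero.mpr hn), pow_succ, hc, neg_one_mul]
  simpa [hcn] using sub_dvd_pow_sub_pow (v ^ n + c) c n

theorem Function.IsPeriodicPt.isUnit {M : Type*} [CommMonoidWithZero M] [IsCancelMulZero M]
    {f : M → M} (hf : ∀ v, v ^ 2 ∣ f (f v)) {h : ℕ} (hh : 0 < h) {z : M}
    (hz : IsPeriodicPt f h z) (hz0 : z ≠ 0) : IsUnit z := by
  have hdvd_iterate : ∀ v k, v ∣ (f^[2])^[k] v := by
    intro v k
    induction k with
    | zero => rfl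
    | succ k ih =>
      rw [iterate_succ_apply']
      exact ih.trans (dvd_of_mul_left_dvd (by simpa [sq] using hf _))
  obtain ⟨k, rfl⟩ : ∃ k, h = k + 1 := ⟨h - 1, by omega⟩
  have hcycle : (f^[2])^[k] (f^[2] z) = z := by
    simpa only [iterate_mul, iterate_succ_apply] using (hz.const_mul 2).eq
  have : z * z ∣ z * 1 := by
    rw [mul_one, ← sq]
    calc z ^ 2 ∣ f^[2] z := hf z
      _ ∣ (f^[2])^[k] (f^[2] z) := hdvd_iterate _ k
      _ = z := hcycle
  exact isUnit_of_dvd_one ((mul_dvd_mul_iff_left hz0).mp this)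

theorem stmt17 (n : ℕ) (hn : 2 ≤ n) (c : ℂ) (hc : c ^ (n - 1) = -1)
    (f : ℂ → ℂ) (hf : f = fun z : ℂ => z ^ n + c)
    (z : ℂ) (hz0 : z ≠ 0) (hper : ∃ h : ℕ, 1 ≤ h ∧ f^[h] z = z) :
    IsIntegral ℤ z ∧ IsIntegral ℤ z⁻¹ := by
  subst hf
  obtain ⟨h, hh, hzh⟩ := hper
  have hc_int : IsIntegral ℤ c :=
    IsIntegral.of_pow (n := n - 1) (by omega) (hc ▸ isIntegral_one.neg)
  let c' : integralClosure ℤ ℂ := ⟨c, hc_int⟩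
  let g : integralClosure ℤ ℂ → integralClosure ℤ ℂ := fun v => v ^ n + c'
  have hz_int : IsIntegral ℤ z := by
    refine isIntegral_trans (A := integralClosure ℤ ℂ) z
      (isIntegral_of_isPeriodicPt (p := X ^ n + C c') (monic_X_pow_add_C _ (by omega))
        (by rw [natDegree_X_pow_add_C]; exact hn) hh ?_)
    simpa [IsPeriodicPt, IsFixedPt] using hzh
  have hval : Semiconj Subtype.val g (fun x : ℂ => x ^ n + c) := fun _ => rfl
  have hperiodic : IsPeriodicPt g h ⟨z, hz_int⟩ :=
    Subtype.val_injective ((hval.iterate_right h _).trans hzh)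
  have hc' : c' ^ (n - 1) = -1 := Subtype.ext hc
  have hsq_dvd (v) : v ^ 2 ∣ g (g v) :=
    (pow_dvd_pow v hn).trans (pow_dvd_pow_add_pow_add (by omega) hc' v)
  have hunit : IsUnit (⟨z, hz_int⟩ : integralClosure ℤ ℂ) :=
    hperiodic.isUnit hsq_dvd hh fun h0 => hz0 (congrArg Subtype.val h0)
  obtain ⟨w, hw⟩ := hunit.exists_right_inv
  refine ⟨hz_int, ?_⟩
  rw [inv_eq_of_mul_eq_one_right (congrArg Subtype.val hw)]
  exact w.2
end

section
/- Let n ≥ 2 be an integer, c ∈ ℂ, and let z_0, z_1, …, z_{h-1} (indices modulo h) be a periodic orbit of f_c of period h > 1, so that z_{j+1} = z_jⁿ + c for all j and the points z_0, …, z_{h-1} are pairwise distinct. Define φ(x,y) = x^{n-1} + x^{n-2}y + ⋯ + x·y^{n-2} + y^{n-1}. Then ∏_{j mod h} φ(z_j, z_{j+1}) = 1. -/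
/-!
Put `g j = z j - z (j + 1)`. Since `φ(x, y) (x - y) = xⁿ - yⁿ = f_c(x) - f_c(y)`, the factor
`φ(z j, z (j + 1))` carries `g j` to `g (j + 1)`. Around the cycle these ratios telescope to `1`,
and no `g j` vanishes because consecutive points of an orbit of period `h > 1` are distinct.
-/

open Finset

theorem Finset.prod_range_succ_eq_prod_range_of_periodic {M : Type*} [CommMonoid M]
    (g : ℕ → M) {h : ℕ} (hper : g h = g 0) :
    ∏ j ∈ range h, g (j + 1) = ∏ j ∈ range h, g j := by
  cases h with
  | zero => simp
  | succ k => rw [prod_range_succ, prod_range_succ', hper]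

theorem Finset.prod_range_eq_one_of_mul_eq_succ {M : Type*} [CommMonoidWithZero M]
    [Nontrivial M] [IsCancelMulZero M] (a g : ℕ → M) {h : ℕ}
    (hstep : ∀ j, a j * g j = g (j + 1)) (hper : g h = g 0)
    (hne : ∀ j < h, g j ≠ 0) :
    ∏ j ∈ range h, a j = 1 := by
  have hprod_ne : ∏ j ∈ range h, g j ≠ 0 :=
    prod_ne_zero_iff.mpr fun j hj => hne j (mem_range.mp hj)
  refine mul_right_cancel₀ hprod_ne ?_
  calc (∏ j ∈ range h, a j) * ∏ j ∈ range h, g j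
      = ∏ j ∈ range h, g (j + 1) := by
        rw [← prod_mul_distrib]
        exact prod_congr rfl fun j _ => hstep j
    _ = ∏ j ∈ range h, g j := prod_range_succ_eq_prod_range_of_periodic g hper
    _ = 1 * ∏ j ∈ range h, g j := (one_mul _).symm

theorem geom_sum₂_mul_sub_eq_sub_of_pow_add {R : Type*} [CommRing R] (n : ℕ) (c x y x' y' : R)
    (hx : x' = x ^ n + c) (hy : y' = y ^ n + c) :
    (∑ i ∈ range n, x ^ i * y ^ (n - 1 - i)) * (x - y) = x' - y' := by
  rw [geom_sum₂_mul, hx, hy]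
  ring

theorem apply_ne_apply_succ_of_periodic {α : Type*} (z : ℕ → α) {h : ℕ} (hh : 1 < h)
    (hper : z h = z 0) (hdist : ∀ i j : ℕ, i < h → j < h → z i = z j → i = j) {j : ℕ}
    (hj : j < h) : z j ≠ z (j + 1) := by
  intro heq
  rcases (Nat.succ_le_of_lt hj).lt_or_eq with hlt | rfl
  · exact absurd (hdist j (j + 1) hj hlt heq) (by omega)
  · exact absurd (hdist j 0 hj (by omega) (heq.trans hper)) (by omega)

theorem stmt18_general (n : ℕ) (c : ℂ) (h : ℕ) (hh : 1 < h)
    (z : ℕ → ℂ)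
    (hstep : ∀ j : ℕ, z (j + 1) = (z j) ^ n + c)
    (hper : z h = z 0)
    (hdist : ∀ i j : ℕ, i < h → j < h → z i = z j → i = j) :
    ∏ j ∈ Finset.range h,
      (∑ i ∈ Finset.range n, (z j) ^ i * (z (j + 1)) ^ (n - 1 - i)) = 1 := by
  refine prod_range_eq_one_of_mul_eq_succ _ (fun j => z j - z (j + 1)) (fun j => ?_) ?_ ?_
  · exact geom_sum₂_mul_sub_eq_sub_of_pow_add n c _ _ _ _ (hstep j) (hstep (j + 1))
  · simp only [hper, hstep h, hstep 0]
  · exact fun j hj => sub_ne_zero.mpr (apply_ne_apply_succ_of_periodic z hh hper hdist hj)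

theorem stmt18 (n : ℕ) (hn : 2 ≤ n) (c : ℂ) (h : ℕ) (hh : 1 < h)
    (z : ℕ → ℂ)
    (hstep : ∀ j : ℕ, z (j + 1) = (z j) ^ n + c)
    (hper : z h = z 0)
    (hdist : ∀ i j : ℕ, i < h → j < h → z i = z j → i = j) :
    ∏ j ∈ Finset.range h,
      (∑ i ∈ Finset.range n, (z j) ^ i * (z (j + 1)) ^ (n - 1 - i)) = 1 :=
  stmt18_general n c h hh z hstep hper hdist
end
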